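/- arXiv:math/0111034 — 3 statements merged into one kernel-verified Lean document; each statement's English description precedes it below -/
import Mathlib

section
/- Condensation identity for a cell of the Aztec diamond: let ω be a nonnegative real weight function on the edges of A_n and let c be a cell of A_n with center (p,q) and vertices N = (p,q+1), W = (p−1,q), E = (p+1,q), S = (p,q−1). For a subset T of these vertices, let A_n − T denote the weighted induced subgraph of A_n obtained by deleting the vertices of T. Then M(A_n) · M(A_n − {N,W,E,S}) = M(A_n − {N,W}) · M(A_n − {E,S}) + M(A_n − {N,E}) · M(A_n − {W,S}), where all matching sums are taken with the weights ω inherited on surviving edges. -/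
/-!
Kuo's graphical condensation. Superimpose the two matchings of a pair counted on either side of
the identity: their symmetric difference has maximum degree two and odd degree exactly at the four
cell vertices, so the component of `N` is an alternating path from `N` to another cell vertex `x`,
and exchanging the two matchings along it is a weight-preserving involution. The end `x` decides
where the new pair is counted. It is not `S`: otherwise the alternating path from `W` would end at
`E`, but a chain from `N` to `S` closed through the cell centre separates `W` from `E` (the parity
of the number of crossings of a horizontal ray differs at `W` and `E` and is constant along a path
avoiding the chain). Between `W` and `E` the colouring decides: the ends of an alternating path
have equal colours exactly when its end edges come from different matchings.
-/

open scoped Classical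

/-- A finset `M` of edges is a perfect matching of the graph `G` relative to the
vertex set `S`: every edge of `M` is an edge of `G`, and every vertex of `S`
belongs to exactly one edge of `M`. -/
def IsPM {V : Type} (G : SimpleGraph V) (S : Set V) (M : Finset (Sym2 V)) : Prop :=
  (∀ e ∈ M, e ∈ G.edgeSet) ∧ ∀ v ∈ S, ∃! e, e ∈ M ∧ v ∈ e

/-- `mSum G S ω` is the sum, over all perfect matchings `M` of `G` relative to the
vertex set `S`, of the product of the `ω`-weights of the edges of `M`. -/
noncomputable def mSum {V : Type} (G : SimpleGraph V) (S : Set V) (ω : Sym2 V → ℝ) : ℝ :=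
  ∑ᶠ M ∈ {M : Finset (Sym2 V) | IsPM G S M}, ∏ e ∈ M, ω e

/-- The vertex set of the Aztec diamond graph of order `n`. -/
def aztecSet (n : ℕ) : Set (ℤ × ℤ) :=
  {v | Odd (v.1 + v.2) ∧ |v.1| ≤ (n : ℤ) ∧ |v.2| ≤ (n : ℤ)}

/-- The Aztec diamond graph of order `n`, realized as a graph on `ℤ × ℤ`:
two vertices of the diamond are adjacent exactly when their Euclidean
distance is `√2`. -/
def aztec (n : ℕ) : SimpleGraph (ℤ × ℤ) where
  Adj u v := u ∈ aztecSet n ∧ v ∈ aztecSet n ∧ (u.1 - v.1) ^ 2 + (u.2 - v.2) ^ 2 = 2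
  symm := by
    constructor
    rintro u v ⟨hu, hv, h⟩
    exact ⟨hv, hu, by linear_combination h⟩
  loopless := by
    constructor
    rintro u ⟨-, -, h⟩
    simp at h

/-- `(p, q)` is the center of a cell of the Aztec diamond graph of order `n`:
`p ≡ q ≡ n + 1 (mod 2)`, `|p| ≤ n − 1` and `|q| ≤ n − 1`. -/
def IsCellCenter (n : ℕ) (p q : ℤ) : Prop :=
  (p - ((n : ℤ) + 1)) % 2 = 0 ∧ (q - ((n : ℤ) + 1)) % 2 = 0 ∧
    |p| ≤ (n : ℤ) - 1 ∧ |q| ≤ (n : ℤ) - 1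

/-- The NW edge of the cell with center `(p, q)`. -/
def nwEdge (p q : ℤ) : Sym2 (ℤ × ℤ) := s((p, q + 1), (p - 1, q))

/-- The NE edge of the cell with center `(p, q)`. -/
def neEdge (p q : ℤ) : Sym2 (ℤ × ℤ) := s((p, q + 1), (p + 1, q))

/-- The SW edge of the cell with center `(p, q)`. -/
def swEdge (p q : ℤ) : Sym2 (ℤ × ℤ) := s((p - 1, q), (p, q - 1))

/-- The SE edge of the cell with center `(p, q)`. -/
def seEdge (p q : ℤ) : Sym2 (ℤ × ℤ) := s((p + 1, q), (p, q - 1))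

/-- The cell-factor `D_ω` of the cell with center `(p, q)`:
`ω(NW)·ω(SE) + ω(NE)·ω(SW)`. -/
noncomputable def cellFactor (ω : Sym2 (ℤ × ℤ) → ℝ) (p q : ℤ) : ℝ :=
  ω (nwEdge p q) * ω (seEdge p q) + ω (neEdge p q) * ω (swEdge p q)

/-- The graph obtained from `G` by deleting the vertices in `T`
(together with all incident edges). -/
def delVerts {V : Type} (G : SimpleGraph V) (T : Set V) : SimpleGraph V where
  Adj u v := G.Adj u v ∧ u ∉ T ∧ v ∉ T
  symm := by
    constructor
    rintro u v ⟨h, hu, hv⟩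
    exact ⟨h.symm, hv, hu⟩
  loopless := by
    constructor
    rintro u ⟨h, -, -⟩
    exact G.irrefl h

/-- `M(A_n − T)`: the weighted sum of perfect matchings of the induced subgraph of
the Aztec diamond graph of order `n` obtained by deleting the vertices of `T`. -/
noncomputable def aztecDel (n : ℕ) (ω : Sym2 (ℤ × ℤ) → ℝ) (T : Set (ℤ × ℤ)) : ℝ :=
  mSum (delVerts (aztec n) T) (aztecSet n \ T) ω

open Finset SimpleGraph
open scoped symmDiff

noncomputable section

namespace AztecCondensation

lemma eq_one_of_odd_of_le_two {k : ℕ} (h : Odd k) (h₂ : k ≤ 2) : k = 1 := by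
  obtain ⟨j, rfl⟩ := h
  omega

lemma exists_adj_dist_lt {V : Type*} {G : SimpleGraph V} {a v : V} (h : G.Reachable a v)
    (hne : a ≠ v) : ∃ u, G.Adj u v ∧ G.dist a u < G.dist a v := by
  obtain ⟨p, hp⟩ := h.exists_walk_length_eq_dist
  cases hq : p.reverse with
  | nil => exact absurd rfl hne
  | cons hadj q =>
    refine ⟨_, hadj.symm, ?_⟩
    have hlen : p.length = q.length + 1 := by
      rw [← Walk.length_reverse, hq, Walk.length_cons]
    have := dist_le q.reverse
    rw [Walk.length_reverse] at this
    omega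

section EdgeSets

variable {V : Type*} {D : Finset (Sym2 V)} {a v : V}

abbrev toGraph (D : Finset (Sym2 V)) : SimpleGraph V := fromEdgeSet (D : Set (Sym2 V))

def component (D : Finset (Sym2 V)) (a : V) : Finset (Sym2 V) :=
  {e ∈ D | ∃ v ∈ e, (toGraph D).Reachable a v}

lemma component_subset : component D a ⊆ D := filter_subset _ _

lemma reachable_of_mem_component {e : Sym2 V} (he : e ∈ component D a) (hv : v ∈ e) :
    (toGraph D).Reachable a v := by
  obtain ⟨heD, u, hu, hr⟩ := mem_filter.mp he
  by_cases huv : u = v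
  · exact huv ▸ hr
  · refine hr.trans (Adj.reachable ((fromEdgeSet_adj _).mpr ⟨?_, huv⟩))
    rwa [← (Sym2.mem_and_mem_iff huv).mp ⟨hu, hv⟩]

lemma mem_component_iff {e : Sym2 V} (hv : v ∈ e) :
    e ∈ component D a ↔ e ∈ D ∧ (toGraph D).Reachable a v :=
  ⟨fun he => ⟨component_subset he, reachable_of_mem_component he hv⟩,
    fun ⟨heD, hr⟩ => mem_filter.mpr ⟨heD, v, hv, hr⟩⟩

lemma reachable_component (h : (toGraph D).Reachable a v) :
    (toGraph (component D a)).Reachable a v := by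
  rw [reachable_iff_reflTransGen] at h ⊢
  induction h with
  | refl => rfl
  | @tail c w hac hcw ih =>
    obtain ⟨hcwD, hne⟩ := (fromEdgeSet_adj _).mp hcw
    refine ih.tail ((fromEdgeSet_adj _).mpr ⟨?_, hne⟩)
    exact (mem_component_iff (Sym2.mem_mk_left c w)).mpr
      ⟨hcwD, (reachable_iff_reflTransGen _ _).mpr hac⟩

lemma not_isDiag_of_color {γ : V → ZMod 2} (hγ : ∀ u w, s(u, w) ∈ D → γ u + γ w = 1) :
    ∀ e ∈ D, ¬ e.IsDiag := by
  intro e he h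
  induction e using Sym2.ind with
  | _ u w =>
    rw [Sym2.mk_isDiag_iff] at h
    subst h
    have := hγ u u he
    rw [← two_mul, show (2 : ZMod 2) = 0 from rfl, zero_mul] at this
    exact zero_ne_one this

end EdgeSets

section Degrees

variable {V : Type*} [DecidableEq V] {D : Finset (Sym2 V)} {a v : V}

def deg (D : Finset (Sym2 V)) (v : V) : ℕ := #{e ∈ D | v ∈ e}

def verts (D : Finset (Sym2 V)) : Finset V := D.biUnion Sym2.toFinset

lemma mem_verts : v ∈ verts D ↔ ∃ e ∈ D, v ∈ e := by
  simp [verts]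

lemma deg_eq_zero_iff : deg D v = 0 ↔ v ∉ verts D := by
  simp [deg, mem_verts, filter_eq_empty_iff]

lemma mem_verts_of_odd_deg (h : Odd (deg D v)) : v ∈ verts D :=
  not_not.mp (deg_eq_zero_iff.not.mp h.pos.ne')

lemma deg_mono {A B : Finset (Sym2 V)} (h : A ⊆ B) (v : V) : deg A v ≤ deg B v :=
  card_le_card (filter_subset_filter _ h)

lemma deg_union {D₁ D₂ : Finset (Sym2 V)} (h : Disjoint D₁ D₂) (v : V) :
    deg (D₁ ∪ D₂) v = deg D₁ v + deg D₂ v := by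
  simp only [deg, filter_union]
  exact card_union_of_disjoint (disjoint_filter_filter h)

lemma deg_insert {e : Sym2 V} (he : e ∉ D) (v : V) :
    deg (insert e D) v = deg D v + if v ∈ e then 1 else 0 := by
  simp only [deg, filter_insert]
  split_ifs with h
  · exact card_insert_of_notMem fun h' => he (mem_filter.mp h').1
  · rfl

lemma sum_toFinset_of_not_isDiag {R : Type*} [AddCommMonoid R] {u w : V} (h : ¬ s(u, w).IsDiag)
    (f : V → R) : ∑ v ∈ s(u, w).toFinset, f v = f u + f w := by
  rw [Sym2.toFinset_mk_eq, sum_pair (by simpa using h)]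

lemma sum_deg_mul {R : Type*} [CommSemiring R] {S : Finset V} (hS : ∀ e ∈ D, ∀ v ∈ e, v ∈ S)
    (f : V → R) : ∑ v ∈ S, deg D v * f v = ∑ e ∈ D, ∑ v ∈ e.toFinset, f v := by
  simp_rw [deg, card_filter, Nat.cast_sum, sum_mul, Nat.cast_ite, ite_mul, Nat.cast_one, one_mul,
    Nat.cast_zero, zero_mul]
  rw [sum_comm]
  refine sum_congr rfl fun e he => ?_
  rw [← sum_filter]
  congr 1
  ext v
  simp only [mem_filter, Sym2.mem_toFinset]
  exact ⟨And.right, fun h => ⟨hS e he v h, h⟩⟩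

lemma sum_deg (hD : ∀ e ∈ D, ¬ e.IsDiag) : ∑ v ∈ verts D, deg D v = 2 * #D := by
  have := sum_deg_mul (D := D) (fun e he v hv => mem_verts.mpr ⟨e, he, hv⟩) (fun _ => (1 : ℕ))
  simp only [mul_one, Nat.cast_id] at this
  rw [this, sum_congr rfl fun e he => by
    rw [sum_const, smul_eq_mul, mul_one, Sym2.card_toFinset_of_not_isDiag e (hD e he)]]
  rw [sum_const, smul_eq_mul, mul_comm]

lemma even_card_odd_deg (hD : ∀ e ∈ D, ¬ e.IsDiag) : Even #{v ∈ verts D | Odd (deg D v)} :=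
  (even_sum_iff_even_card_odd _).mp ⟨#D, by rw [sum_deg hD, two_mul]⟩

lemma mem_verts_of_reachable (h : (toGraph D).Reachable a v) (hne : a ≠ v) : a ∈ verts D := by
  rw [reachable_iff_reflTransGen] at h
  rcases h.cases_head with rfl | ⟨c, hac, -⟩
  · exact absurd rfl hne
  · exact mem_verts.mpr ⟨_, ((fromEdgeSet_adj _).mp hac).1, Sym2.mem_mk_left a c⟩

/-- Each vertex other than `a` is sent to the last edge of a shortest path from `a`. -/
lemma card_le_card_add_one_of_reachable {S : Finset V}
    (hS : ∀ v ∈ S, (toGraph D).Reachable a v) : #S ≤ #D + 1 := by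
  have hpred : ∀ v ∈ S.erase a, ∃ u, (toGraph D).Adj u v ∧
      (toGraph D).dist a u < (toGraph D).dist a v :=
    fun v hv => exists_adj_dist_lt (hS v (mem_of_mem_erase hv)) (ne_of_mem_erase hv).symm
  choose! pred hpred using hpred
  have hinj : #(S.erase a) ≤ #D := by
    refine card_le_card_of_injOn (fun v => s(pred v, v)) (fun v hv => ?_) (fun v hv w hw h => ?_)
    · exact ((fromEdgeSet_adj _).mp (hpred v hv).1).1
    · rcases Sym2.eq_iff.mp h with ⟨-, h⟩ | ⟨h₁, h₂⟩
      · exact h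
      · have hv' := (hpred v hv).2
        have hw' := (hpred w hw).2
        rw [h₁] at hv'
        rw [← h₂] at hw'
        omega
  have := pred_card_le_card_erase (s := S) (a := a)
  omega

lemma card_odd_deg_le_two (hD : ∀ e ∈ D, ¬ e.IsDiag) (hdeg : ∀ v, deg D v ≤ 2)
    (hconn : ∀ v ∈ verts D, (toGraph D).Reachable a v) : #{v ∈ verts D | Odd (deg D v)} ≤ 2 := by
  have hle : ∑ v ∈ verts D, deg D v + #{v ∈ verts D | Odd (deg D v)} ≤ 2 * #(verts D) := by
    rw [card_filter, ← sum_add_distrib, mul_comm, ← smul_eq_mul, ← sum_const]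
    refine sum_le_sum fun v _ => ?_
    have := hdeg v
    split_ifs with h
    · obtain ⟨k, hk⟩ := h
      omega
    · omega
  have := sum_deg hD
  have := card_le_card_add_one_of_reachable hconn
  omega

lemma reachable_of_mem_verts_component (hv : v ∈ verts (component D a)) :
    (toGraph D).Reachable a v := by
  obtain ⟨e, he, hve⟩ := mem_verts.mp hv
  exact reachable_of_mem_component he hve

lemma deg_component :
    deg (component D a) v = if (toGraph D).Reachable a v then deg D v else 0 := by
  split_ifs with hr
  · simp only [deg]
    congr 1
    ext e
    simp only [mem_filter]
    exact ⟨fun ⟨he, hv⟩ => ⟨component_subset he, hv⟩,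
      fun ⟨he, hv⟩ => ⟨(mem_component_iff hv).mpr ⟨he, hr⟩, hv⟩⟩
  · simp only [deg, card_eq_zero, filter_eq_empty_iff]
    exact fun e he hv => hr (reachable_of_mem_component he hv)

lemma odd_deg_component_iff {x : V} (hx : (toGraph D).Reachable a x)
    (hodd : ∀ v, (toGraph D).Reachable a v → (Odd (deg D v) ↔ v = a ∨ v = x)) (v : V) :
    Odd (deg (component D a) v) ↔ v = a ∨ v = x := by
  rw [deg_component]
  split_ifs with hr
  · exact hodd v hr
  · simp only [Nat.not_odd_zero, false_iff]
    rintro (rfl | rfl)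
    · exact hr .rfl
    · exact hr hx

theorem exists_partner (hD : ∀ e ∈ D, ¬ e.IsDiag) (hdeg : ∀ v, deg D v ≤ 2) (ha : deg D a = 1) :
    ∃ x ≠ a, (toGraph D).Reachable a x ∧
      ∀ v, (toGraph D).Reachable a v → (Odd (deg D v) ↔ v = a ∨ v = x) := by
  set P := component D a
  have hdegP : ∀ v, (toGraph D).Reachable a v → deg P v = deg D v := fun v hv => by
    rw [deg_component, if_pos hv]
  have hP : ∀ e ∈ P, ¬ e.IsDiag := fun e he => hD e (component_subset he)
  have hO := card_odd_deg_le_two hP (fun v => (deg_mono component_subset v).trans (hdeg v))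
    fun v hv => reachable_component (reachable_of_mem_verts_component hv)
  have haO : a ∈ {v ∈ verts P | Odd (deg P v)} := by
    have ha' : Odd (deg P a) := by rw [hdegP a .rfl, ha]; exact odd_one
    exact mem_filter.mpr ⟨mem_verts_of_odd_deg ha', ha'⟩
  obtain ⟨k, hk⟩ := even_card_odd_deg hP
  have hpos := card_pos.mpr ⟨a, haO⟩
  obtain ⟨u, w, huw, hOuw⟩ := card_eq_two.mp (show #{v ∈ verts P | Odd (deg P v)} = 2 by omega)
  have hodd : ∀ v, (toGraph D).Reachable a v → (Odd (deg D v) ↔ v = u ∨ v = w) := fun v hv => by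
    have := (mem_filter (s := verts P) (p := fun v => Odd (deg P v)) (a := v)).symm
    rw [hOuw, mem_insert, mem_singleton, hdegP v hv] at this
    exact ⟨fun h => this.mp ⟨mem_verts_of_odd_deg (hdegP v hv ▸ h), h⟩, fun h => (this.mpr h).2⟩
  have hreach : ∀ v ∈ ({u, w} : Finset V), (toGraph D).Reachable a v := fun v hv => by
    rw [← hOuw] at hv
    exact reachable_of_mem_verts_component (mem_filter.mp hv).1
  rw [hOuw, mem_insert, mem_singleton] at haO
  rcases haO with rfl | rfl
  · exact ⟨w, huw.symm, hreach w (by simp), hodd⟩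
  · exact ⟨u, huw, hreach u (by simp), fun v hv => (hodd v hv).trans or_comm⟩

lemma sum_deg_mul_color_add_deg {D₁ D₂ : Finset (Sym2 V)} {γ : V → ZMod 2}
    (hγ : ∀ u w, s(u, w) ∈ D₁ ∪ D₂ → γ u + γ w = 1) :
    ∑ v ∈ verts (D₁ ∪ D₂), ((deg (D₁ ∪ D₂) v : ZMod 2) * γ v + deg D₂ v) = #(D₁ ∪ D₂) := by
  have hverts : ∀ e ∈ D₁ ∪ D₂, ∀ v ∈ e, v ∈ verts (D₁ ∪ D₂) :=
    fun e he v hv => mem_verts.mpr ⟨e, he, hv⟩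
  have hedge : ∀ e ∈ D₁ ∪ D₂, ∑ v ∈ e.toFinset, γ v = 1 ∧ ∑ v ∈ e.toFinset, (1 : ZMod 2) = 0 := by
    intro e he
    induction e using Sym2.ind with
    | _ u w =>
      have huw := not_isDiag_of_color hγ _ he
      rw [sum_toFinset_of_not_isDiag huw, sum_toFinset_of_not_isDiag huw]
      exact ⟨hγ u w he, rfl⟩
  have h₂ := sum_deg_mul (fun e he => hverts e (subset_union_right he)) (fun _ => (1 : ZMod 2))
  rw [sum_congr rfl fun e he => (hedge e (subset_union_right he)).2] at h₂
  simp only [mul_one, sum_const_zero] at h₂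
  rw [sum_add_distrib, h₂, add_zero, sum_deg_mul hverts, sum_congr rfl fun e he => (hedge e he).1]
  simp

theorem color_add_color_eq_one {D₁ D₂ : Finset (Sym2 V)} {γ : V → ZMod 2} {x : V}
    (hdisj : Disjoint D₁ D₂) (h₁ : ∀ v, deg D₁ v ≤ 1) (h₂ : ∀ v, deg D₂ v ≤ 1)
    (hγ : ∀ u w, s(u, w) ∈ D₁ ∪ D₂ → γ u + γ w = 1)
    (hodd : ∀ v, Odd (deg (D₁ ∪ D₂) v) ↔ v = a ∨ v = x) (hax : a ≠ x) :
    γ a + γ x + deg D₂ a + deg D₂ x = 1 := by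
  set D := D₁ ∪ D₂
  have hdeg : ∀ v, deg D v = deg D₁ v + deg D₂ v := deg_union hdisj
  have hodd_one : ∀ v, v = a ∨ v = x → deg D v = 1 := fun v hv => by
    obtain ⟨k, hk⟩ := (hodd v).mpr hv
    have := h₁ v
    have := h₂ v
    have := hdeg v
    omega
  have hmem : ∀ v, v = a ∨ v = x → v ∈ verts D := fun v hv =>
    mem_verts_of_odd_deg ((hodd v).mpr hv)
  have hx : x ∈ (verts D).erase a := mem_erase.mpr ⟨hax.symm, hmem x (Or.inr rfl)⟩
  set R := ((verts D).erase a).erase x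
  have hsplit : ∀ {M : Type} [AddCommMonoid M] (f : V → M),
      ∑ v ∈ verts D, f v = f a + f x + ∑ v ∈ R, f v := fun f => by
    rw [← add_sum_erase _ _ (hmem a (Or.inl rfl)), ← add_sum_erase _ _ hx, add_assoc]
  have hR : ∀ v ∈ R, deg D v = 2 ∧ deg D₂ v = 1 := fun v hv => by
    obtain ⟨hvx, hv⟩ := mem_erase.mp hv
    obtain ⟨hva, hv⟩ := mem_erase.mp hv
    have heven : ¬ Odd (deg D v) := fun h => by rcases (hodd v).mp h with h | h <;> contradiction
    have := deg_eq_zero_iff.not.mpr (not_not.mpr hv)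
    have := h₁ v
    have := h₂ v
    have := hdeg v
    rw [Nat.not_odd_iff_even] at heven
    obtain ⟨k, hk⟩ := heven
    omega
  have hcard : #D = #R + 1 := by
    have := sum_deg (not_isDiag_of_color hγ)
    rw [hsplit, hodd_one a (Or.inl rfl), hodd_one x (Or.inr rfl),
      sum_congr rfl fun v hv => (hR v hv).1, sum_const, smul_eq_mul] at this
    omega
  -- Each edge contributes `1` to `hsum`, and so does each interior vertex of the path.
  have hsum := sum_deg_mul_color_add_deg hγ
  rw [hsplit, hodd_one a (Or.inl rfl), hodd_one x (Or.inr rfl),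
    sum_congr rfl fun v hv => show _ = (1 : ZMod 2) by
      rw [(hR v hv).1, (hR v hv).2, Nat.cast_two, show (2 : ZMod 2) = 0 from rfl]; ring,
    sum_const, nsmul_eq_mul, mul_one, hcard] at hsum
  push_cast at hsum
  linear_combination hsum

end Degrees

section Swap

variable {V : Type*} [DecidableEq V]

lemma deg_symmDiff_add_deg_inter (A B : Finset (Sym2 V)) (v : V) :
    deg (A ∆ B) v + 2 * deg (A ∩ B) v = deg A v + deg B v := by
  have hs : {e ∈ A ∆ B | v ∈ e} = {e ∈ A | v ∈ e} \ {e ∈ B | v ∈ e} ∪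
      {e ∈ B | v ∈ e} \ {e ∈ A | v ∈ e} := by
    ext e
    simp only [mem_filter, mem_union, mem_sdiff, mem_symmDiff]
    tauto
  have hi : {e ∈ A ∩ B | v ∈ e} = {e ∈ A | v ∈ e} ∩ {e ∈ B | v ∈ e} := filter_inter_distrib _ _ _
  have h₁ := card_sdiff_add_card_inter {e ∈ A | v ∈ e} {e ∈ B | v ∈ e}
  have h₂ := card_sdiff_add_card_inter {e ∈ B | v ∈ e} {e ∈ A | v ∈ e}
  rw [inter_comm] at h₂
  simp only [deg, hs, hi, card_union_of_disjoint
    (disjoint_left.mpr fun e h₁ h₂ => (mem_sdiff.mp h₂).2 (mem_sdiff.mp h₁).1)]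
  omega

lemma deg_symmDiff_component (M₁ M₂ : Finset (Sym2 V)) (a v : V) :
    deg (M₁ ∆ component (M₁ ∆ M₂) a) v =
      if (toGraph (M₁ ∆ M₂)).Reachable a v then deg M₂ v else deg M₁ v := by
  simp only [deg]
  split_ifs with hr <;> congr 1 <;> ext e <;> simp only [mem_filter, and_congr_left_iff] <;>
    intro hve <;> simp only [mem_symmDiff, mem_component_iff hve] <;> tauto

lemma prod_symmDiff_mul_prod_symmDiff {β : Type*} [CommMonoid β] {M₁ M₂ P : Finset (Sym2 V)}
    (hP : P ⊆ M₁ ∆ M₂) (f : Sym2 V → β) :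
    (∏ e ∈ M₁ ∆ P, f e) * ∏ e ∈ M₂ ∆ P, f e = (∏ e ∈ M₁, f e) * ∏ e ∈ M₂, f e := by
  have key : ∀ {A B : Finset (Sym2 V)}, P ⊆ A ∆ B → A ∆ P = A \ P ∪ P ∩ B := by
    intro A B h
    ext e
    have := @h e
    simp only [mem_symmDiff, mem_union, mem_sdiff, mem_inter] at *
    tauto
  have hdisj : ∀ {A B : Finset (Sym2 V)}, Disjoint (A \ P) (P ∩ B) := fun {_ _} =>
    disjoint_left.mpr fun e h₁ h₂ => (mem_sdiff.mp h₁).2 (mem_inter.mp h₂).1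
  rw [key hP, key (symmDiff_comm M₁ M₂ ▸ hP), prod_union hdisj, prod_union hdisj]
  conv_rhs => rw [← sdiff_union_inter M₁ P, ← sdiff_union_inter M₂ P, inter_comm M₁,
    inter_comm M₂, prod_union hdisj, prod_union hdisj]
  ac_rfl

lemma filter_mem_union_filter_mem {M₁ M₂ P : Finset (Sym2 V)} (hP : P ⊆ M₁ ∆ M₂) :
    {e ∈ P | e ∈ M₁} ∪ {e ∈ P | e ∈ M₂} = P := by
  rw [← filter_or]
  refine filter_true_of_mem fun e he => ?_
  rcases mem_symmDiff.mp (hP he) with ⟨h, -⟩ | ⟨h, -⟩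
  · exact Or.inl h
  · exact Or.inr h

lemma disjoint_filter_mem {M₁ M₂ P : Finset (Sym2 V)} (hP : P ⊆ M₁ ∆ M₂) :
    Disjoint {e ∈ P | e ∈ M₁} {e ∈ P | e ∈ M₂} :=
  disjoint_filter.mpr fun e he h₁ h₂ => by
    rcases mem_symmDiff.mp (hP he) with ⟨-, h⟩ | ⟨-, h⟩ <;> contradiction

def swap (a : V) (M : Finset (Sym2 V) × Finset (Sym2 V)) : Finset (Sym2 V) × Finset (Sym2 V) :=
  (M.1 ∆ component (M.1 ∆ M.2) a, M.2 ∆ component (M.1 ∆ M.2) a)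

lemma symmDiff_swap (a : V) (M : Finset (Sym2 V) × Finset (Sym2 V)) :
    (swap a M).1 ∆ (swap a M).2 = M.1 ∆ M.2 := by
  simp [swap, symmDiff_symmDiff_symmDiff_comm]

lemma swap_swap (a : V) (M : Finset (Sym2 V) × Finset (Sym2 V)) : swap a (swap a M) = M := by
  conv_lhs => rw [swap, symmDiff_swap]
  simp [swap, symmDiff_symmDiff_cancel_right]

lemma prod_swap {β : Type*} [CommMonoid β] (f : Sym2 V → β) (a : V)
    (M : Finset (Sym2 V) × Finset (Sym2 V)) :
    (∏ e ∈ (swap a M).1, f e) * ∏ e ∈ (swap a M).2, f e = (∏ e ∈ M.1, f e) * ∏ e ∈ M.2, f e :=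
  prod_symmDiff_mul_prod_symmDiff component_subset f

end Swap

section PerfectMatchings

variable {V : Type} {G : SimpleGraph V} {V0 T T₁ T₂ : Set V} {M M₁ M₂ : Finset (Sym2 V)}

lemma mem_edgeSet_delVerts {e : Sym2 V} :
    e ∈ (delVerts G T).edgeSet ↔ e ∈ G.edgeSet ∧ ∀ v ∈ e, v ∉ T := by
  induction e using Sym2.ind with
  | _ u w => simp [delVerts]

lemma delVerts_empty (G : SimpleGraph V) : delVerts G ∅ = G := by
  ext u v
  simp [delVerts]

lemma finite_setOf_isPM (hV0 : V0.Finite) (hG : ∀ e ∈ G.edgeSet, ∀ v ∈ e, v ∈ V0) (T : Set V) :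
    {M | IsPM (delVerts G T) (V0 \ T) M}.Finite := by
  refine (hV0.toFinset.sym2.powerset.finite_toSet).subset fun M hM =>
    mem_coe.mpr (mem_powerset.mpr fun e he => mem_sym2_iff.mpr ?_)
  exact fun v hv => hV0.mem_toFinset.mpr (hG e (mem_edgeSet_delVerts.mp (hM.1 e he)).1 v hv)

variable [DecidableEq V]

lemma deg_eq_one_iff {v : V} : deg M v = 1 ↔ ∃! e, e ∈ M ∧ v ∈ e := by
  simp only [deg, card_eq_one_iff_existsUnique, mem_filter]

lemma isPM_delVerts_iff (hG : ∀ e ∈ G.edgeSet, ∀ v ∈ e, v ∈ V0) :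
    IsPM (delVerts G T) (V0 \ T) M ↔
      ↑M ⊆ G.edgeSet ∧ ∀ v, deg M v = if v ∈ V0 \ T then 1 else 0 := by
  constructor
  · rintro ⟨hM, hv⟩
    refine ⟨fun e he => (mem_edgeSet_delVerts.mp (hM e he)).1, fun v => ?_⟩
    split_ifs with h
    · exact deg_eq_one_iff.mpr (hv v h)
    · refine card_eq_zero.mpr (filter_eq_empty_iff.mpr fun e he hve => h ?_)
      obtain ⟨heG, hT⟩ := mem_edgeSet_delVerts.mp (hM e he)
      exact ⟨hG e heG v hve, hT v hve⟩
  · rintro ⟨hM, hdeg⟩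
    refine ⟨fun e he => mem_edgeSet_delVerts.mpr ⟨hM he, fun v hve hvT => ?_⟩,
      fun v hv => deg_eq_one_iff.mp (by rw [hdeg, if_pos hv])⟩
    have := hdeg v
    rw [if_neg fun h => h.2 hvT, deg_eq_zero_iff] at this
    exact this (mem_verts.mpr ⟨e, he, hve⟩)

lemma deg_isPM_le_one (hG : ∀ e ∈ G.edgeSet, ∀ v ∈ e, v ∈ V0)
    (h : IsPM (delVerts G T) (V0 \ T) M) (v : V) : deg M v ≤ 1 := by
  rw [((isPM_delVerts_iff hG).mp h).2 v]
  split_ifs <;> simp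

theorem isPM_symmDiff_component (hG : ∀ e ∈ G.edgeSet, ∀ v ∈ e, v ∈ V0)
    (h₁ : IsPM (delVerts G T₁) (V0 \ T₁) M₁) (h₂ : IsPM (delVerts G T₂) (V0 \ T₂) M₂) (a : V)
    (hT : ∀ v, v ∈ T ↔ if (toGraph (M₁ ∆ M₂)).Reachable a v then v ∈ T₂ else v ∈ T₁) :
    IsPM (delVerts G T) (V0 \ T) (M₁ ∆ component (M₁ ∆ M₂) a) := by
  rw [isPM_delVerts_iff hG] at *
  refine ⟨fun e he => ?_, fun v => ?_⟩
  · rcases mem_symmDiff.mp he with ⟨he, -⟩ | ⟨he, -⟩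
    · exact h₁.1 he
    · rcases mem_symmDiff.mp (component_subset he) with ⟨he, -⟩ | ⟨he, -⟩
      · exact h₁.1 he
      · exact h₂.1 he
  · rw [deg_symmDiff_component]
    by_cases hr : (toGraph (M₁ ∆ M₂)).Reachable a v
    · simp only [hr, if_true, h₂.2 v, Set.mem_sdiff, hT v]
    · simp only [hr, if_false, h₁.2 v, Set.mem_sdiff, hT v]

lemma subset_edgeSet_symmDiff (h₁ : IsPM (delVerts G T₁) (V0 \ T₁) M₁)
    (h₂ : IsPM (delVerts G T₂) (V0 \ T₂) M₂) : ↑(M₁ ∆ M₂) ⊆ G.edgeSet := fun e he => by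
  rcases mem_symmDiff.mp he with ⟨he, -⟩ | ⟨he, -⟩
  · exact (mem_edgeSet_delVerts.mp (h₁.1 e he)).1
  · exact (mem_edgeSet_delVerts.mp (h₂.1 e he)).1

lemma deg_symmDiff_le_two (hG : ∀ e ∈ G.edgeSet, ∀ v ∈ e, v ∈ V0)
    (h₁ : IsPM (delVerts G T₁) (V0 \ T₁) M₁) (h₂ : IsPM (delVerts G T₂) (V0 \ T₂) M₂) (v : V) :
    deg (M₁ ∆ M₂) v ≤ 2 := by
  rw [isPM_delVerts_iff hG] at h₁ h₂
  have := deg_symmDiff_add_deg_inter M₁ M₂ v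
  rw [h₁.2, h₂.2] at this
  split_ifs at this <;> omega

lemma odd_deg_symmDiff_iff (hG : ∀ e ∈ G.edgeSet, ∀ v ∈ e, v ∈ V0)
    (h₁ : IsPM (delVerts G T₁) (V0 \ T₁) M₁) (h₂ : IsPM (delVerts G T₂) (V0 \ T₂) M₂)
    (hT₁₂ : Disjoint T₁ T₂) (hT : T₁ ∪ T₂ ⊆ V0) (v : V) :
    Odd (deg (M₁ ∆ M₂) v) ↔ v ∈ T₁ ∪ T₂ := by
  rw [isPM_delVerts_iff hG] at h₁ h₂
  have h := deg_symmDiff_add_deg_inter M₁ M₂ v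
  rw [h₁.2, h₂.2, Nat.odd_iff] at *
  by_cases hv : v ∈ T₁ ∪ T₂
  · have h₀ : v ∈ V0 := hT hv
    rcases hv with hv | hv
    · simp [h₀, hv, Set.disjoint_left.mp hT₁₂ hv] at h ⊢
      omega
    · simp [h₀, hv, Set.disjoint_right.mp hT₁₂ hv] at h ⊢
      omega
  · rw [Set.mem_union, not_or] at hv
    simp only [Set.mem_sdiff, hv.1, hv.2, not_false_eq_true, and_true, Set.mem_union,
      or_self, iff_false] at h ⊢
    split_ifs at h <;> omega

theorem color_add_color_of_isPM (hG : ∀ e ∈ G.edgeSet, ∀ v ∈ e, v ∈ V0) {γ : V → ZMod 2}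
    (hγ : ∀ u v, G.Adj u v → γ u + γ v = 1) (h₁ : IsPM (delVerts G T₁) (V0 \ T₁) M₁)
    (h₂ : IsPM (delVerts G T₂) (V0 \ T₂) M₂) (hT₁₂ : Disjoint T₁ T₂) (hT : T₁ ∪ T₂ ⊆ V0)
    {a x : V} (hax : a ≠ x) (hx : (toGraph (M₁ ∆ M₂)).Reachable a x)
    (hodd : ∀ v, (toGraph (M₁ ∆ M₂)).Reachable a v → (Odd (deg (M₁ ∆ M₂) v) ↔ v = a ∨ v = x)) :
    γ a + γ x + (if a ∈ T₁ then 1 else 0) + (if x ∈ T₁ then 1 else 0) = 1 := by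
  set P := component (M₁ ∆ M₂) a
  have hP : P ⊆ M₁ ∆ M₂ := component_subset
  have hDG := subset_edgeSet_symmDiff h₁ h₂
  have hsub : ∀ {M : Finset (Sym2 V)}, {e ∈ P | e ∈ M} ⊆ M := fun he => (mem_filter.mp he).2
  have hμ : ∀ v, v = a ∨ v = x → deg {e ∈ P | e ∈ M₂} v = if v ∈ T₁ then 1 else 0 :=
    fun v hv => by
      have hr : (toGraph (M₁ ∆ M₂)).Reachable a v := by rcases hv with rfl | rfl; exacts [.rfl, hx]
      have hv' := (hodd v hr).mpr hv
      have hsum := deg_union (disjoint_filter_mem hP) v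
      rw [filter_mem_union_filter_mem hP, deg_component, if_pos hr,
        eq_one_of_odd_of_le_two hv' (deg_symmDiff_le_two hG h₁ h₂ v)] at hsum
      have hvT := (odd_deg_symmDiff_iff hG h₁ h₂ hT₁₂ hT v).mp hv'
      have hle₁ := deg_mono (hsub (M := M₁)) v
      have hle₂ := deg_mono (hsub (M := M₂)) v
      rw [isPM_delVerts_iff hG] at h₁ h₂
      rw [h₁.2 v] at hle₁
      rw [h₂.2 v] at hle₂
      by_cases hv₁ : v ∈ T₁
      · rw [if_neg fun h => h.2 hv₁] at hle₁
        rw [if_pos hv₁]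
        omega
      · rw [if_neg fun h => h.2 (hvT.resolve_left hv₁)] at hle₂
        rw [if_neg hv₁]
        omega
  have := color_add_color_eq_one (disjoint_filter_mem hP)
    (fun v => (deg_mono hsub v).trans (deg_isPM_le_one hG h₁ v))
    (fun v => (deg_mono hsub v).trans (deg_isPM_le_one hG h₂ v))
    (fun u w h => hγ u w (hDG (hP (filter_mem_union_filter_mem hP ▸ h))))
    (fun v => by rw [filter_mem_union_filter_mem hP]; exact odd_deg_component_iff hx hodd v) hax
  rwa [hμ a (Or.inl rfl), hμ x (Or.inr rfl), Nat.cast_ite, Nat.cast_ite, Nat.cast_one,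
    Nat.cast_zero] at this

end PerfectMatchings

lemma ne_of_color_eq_add_one {V : Type*} {γ : V → ZMod 2} {u v : V} (h : γ v = γ u + 1) :
    u ≠ v := by
  rintro rfl
  simp at h

lemma mem_symmDiff_pair_iff {V : Type*} {T₁ T₂ : Set V} {K : V → Prop} {a x v : V}
    (hT₁₂ : Disjoint T₁ T₂) (hK : ∀ v ∈ T₁ ∪ T₂, K v ↔ v = a ∨ v = x) (ha : a ∈ T₁ ∪ T₂)
    (hx : x ∈ T₁ ∪ T₂) : v ∈ T₁ ∆ {a, x} ↔ if K v then v ∈ T₂ else v ∈ T₁ := by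
  rw [Set.mem_symmDiff, Set.mem_insert_iff, Set.mem_singleton_iff]
  by_cases hv : v ∈ T₁ ∪ T₂
  · have h₂ : v ∈ T₂ ↔ v ∉ T₁ :=
      ⟨fun h h' => Set.disjoint_left.mp hT₁₂ h' h, fun h => hv.resolve_left h⟩
    rw [hK v hv, h₂]
    split_ifs <;> tauto
  · have hva : v ≠ a := fun h => hv (h ▸ ha)
    have hvx : v ≠ x := fun h => hv (h ▸ hx)
    rw [Set.mem_union, not_or] at hv
    simp [hv.1, hv.2, hva, hvx]

section Faces

variable {V : Type} [DecidableEq V] {G : SimpleGraph V} {V0 : Set V} {γ : V → ZMod 2}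
  {a b c d : V}

/-- The planarity input: if `a, b, d, c` bound a face of a plane graph, every chain of edges
with boundary `{a, d}` meets every path from `b` to `c`. -/
def FaceSeparating (G : SimpleGraph V) (a b c d : V) : Prop :=
  ∀ P Q : Finset (Sym2 V), ↑P ⊆ G.edgeSet → ↑Q ⊆ G.edgeSet →
    (∀ v, Odd (deg P v) ↔ v = a ∨ v = d) → (toGraph Q).Reachable b c →
    Disjoint (verts P) (verts Q) → False

/-- `a, b, d, c`, in this cyclic order, bound a face of the graph `G` on `V0`, which `γ`
properly 2-colours. -/
structure IsBipartiteFace (G : SimpleGraph V) (V0 : Set V) (γ : V → ZMod 2) (a b c d : V) :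
    Prop where
  mem_of_mem_edgeSet : ∀ e ∈ G.edgeSet, ∀ v ∈ e, v ∈ V0
  color_adj : ∀ u v, G.Adj u v → γ u + γ v = 1
  color_b : γ b = γ a + 1
  color_c : γ c = γ a + 1
  color_d : γ d = γ a
  ne_ad : a ≠ d
  ne_bc : b ≠ c
  subset : {a, b, c, d} ⊆ V0
  faceSeparating : FaceSeparating G a b c d

namespace IsBipartiteFace

lemma ne_ab (h : IsBipartiteFace G V0 γ a b c d) : a ≠ b := ne_of_color_eq_add_one h.color_b

lemma ne_ac (h : IsBipartiteFace G V0 γ a b c d) : a ≠ c := ne_of_color_eq_add_one h.color_c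

lemma ne_bd (h : IsBipartiteFace G V0 γ a b c d) : b ≠ d :=
  (ne_of_color_eq_add_one (γ := γ) (by rw [h.color_b, h.color_d])).symm

lemma ne_cd (h : IsBipartiteFace G V0 γ a b c d) : c ≠ d :=
  (ne_of_color_eq_add_one (γ := γ) (by rw [h.color_c, h.color_d])).symm

end IsBipartiteFace

theorem not_reachable_of_faceSeparating (hsep : FaceSeparating G a b c d)
    {D : Finset (Sym2 V)} (hD : ↑D ⊆ G.edgeSet) (hdeg : ∀ v, deg D v ≤ 2)
    (hodd : ∀ v, Odd (deg D v) ↔ v = a ∨ v = b ∨ v = c ∨ v = d)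
    (hab : a ≠ b) (had : a ≠ d) (hbd : b ≠ d) : ¬ (toGraph D).Reachable a d := by
  intro hreach
  have hloop : ∀ e ∈ D, ¬ e.IsDiag := fun e he => G.not_isDiag_of_mem_edgeSet (hD he)
  have hdeg_one : ∀ v, (v = a ∨ v = b ∨ v = c ∨ v = d) → deg D v = 1 := fun v hv =>
    eq_one_of_odd_of_le_two ((hodd v).mpr hv) (hdeg v)
  obtain ⟨x, -, -, hx⟩ := exists_partner hloop hdeg (hdeg_one a (by simp))
  have hdx : d = x := ((hx d hreach).mp ((hodd d).mpr (by simp))).resolve_left had.symm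
  have hb : ¬ (toGraph D).Reachable a b := fun h => by
    rcases (hx b h).mp ((hodd b).mpr (by simp)) with h | h
    · exact hab h.symm
    · exact hbd (h.trans hdx.symm)
  obtain ⟨y, hyb, hby, hy⟩ := exists_partner hloop hdeg (hdeg_one b (by simp))
  obtain rfl : y = c := by
    rcases (hodd y).mp ((hy y hby).mpr (Or.inr rfl)) with rfl | rfl | rfl | rfl
    · exact absurd hby.symm hb
    · exact absurd rfl hyb
    · rfl
    · exact absurd (hreach.trans hby.symm) hb
  refine hsep (component D a) (component D b) (fun e he => hD (component_subset he))
    (fun e he => hD (component_subset he)) (fun v => ?_) (reachable_component hby) ?_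
  · rw [odd_deg_component_iff hreach (hdx ▸ hx)]
  · refine disjoint_left.mpr fun v hvP hvQ => hb ?_
    exact (reachable_of_mem_verts_component hvP).trans
      (reachable_of_mem_verts_component hvQ).symm

variable {T₁ T₂ : Set V} {M₁ M₂ : Finset (Sym2 V)}

theorem exists_partner_of_isPM (h : IsBipartiteFace G V0 γ a b c d)
    (hT : T₁ ∪ T₂ = {a, b, c, d}) (hT₁₂ : Disjoint T₁ T₂)
    (h₁ : IsPM (delVerts G T₁) (V0 \ T₁) M₁) (h₂ : IsPM (delVerts G T₂) (V0 \ T₂) M₂) :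
    ∃ x, (x = b ∨ x = c) ∧ (x ∈ T₁ ↔ a ∈ T₁) ∧
      ∀ v ∈ ({a, b, c, d} : Set V), ((toGraph (M₁ ∆ M₂)).Reachable a v ↔ v = a ∨ v = x) := by
  have hTV : T₁ ∪ T₂ ⊆ V0 := hT ▸ h.subset
  have hodd : ∀ v, Odd (deg (M₁ ∆ M₂) v) ↔ v = a ∨ v = b ∨ v = c ∨ v = d := fun v => by
    rw [odd_deg_symmDiff_iff h.mem_of_mem_edgeSet h₁ h₂ hT₁₂ hTV, hT]
    simp
  have hdeg := deg_symmDiff_le_two h.mem_of_mem_edgeSet h₁ h₂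
  have hDG := subset_edgeSet_symmDiff h₁ h₂
  obtain ⟨x, hxa, hax, hx⟩ := exists_partner (fun e he => G.not_isDiag_of_mem_edgeSet (hDG he))
    hdeg (eq_one_of_odd_of_le_two ((hodd a).mpr (by simp)) (hdeg a))
  have hxbc : x = b ∨ x = c := by
    have hxd : x ≠ d := fun hxd => not_reachable_of_faceSeparating h.faceSeparating hDG hdeg
      hodd h.ne_ab h.ne_ad h.ne_bd (hxd ▸ hax)
    rcases (hodd x).mp ((hx x hax).mpr (Or.inr rfl)) with h | h | h | h
    · exact absurd h hxa
    · exact Or.inl h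
    · exact Or.inr h
    · exact absurd h hxd
  refine ⟨x, hxbc, ?_, fun v hv => ⟨fun hr => (hx v hr).mp ((hodd v).mpr (by simpa using hv)), ?_⟩⟩
  · have hpar := color_add_color_of_isPM h.mem_of_mem_edgeSet h.color_adj h₁ h₂ hT₁₂ hTV
      hxa.symm hax hx
    -- `x` has the other colour, so the end edges of the path lie in the same matching.
    have hγx : γ x = γ a + 1 := by rcases hxbc with rfl | rfl; exacts [h.color_b, h.color_c]
    rw [hγx] at hpar
    have h2 : (2 : ZMod 2) = 0 := rfl
    by_cases ha₁ : a ∈ T₁ <;> by_cases hx₁ : x ∈ T₁ <;>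
      simp only [ha₁, hx₁, if_true, if_false, iff_true, iff_false, not_true] at hpar ⊢ <;>
      exact zero_ne_one (by linear_combination (-1 : ZMod 2) * hpar + γ a * h2)
  · rintro (rfl | rfl)
    · rfl
    · exact hax

theorem swap_isPM (h : IsBipartiteFace G V0 γ a b c d) (hT : T₁ ∪ T₂ = {a, b, c, d})
    (hT₁₂ : Disjoint T₁ T₂) (h₁ : IsPM (delVerts G T₁) (V0 \ T₁) M₁)
    (h₂ : IsPM (delVerts G T₂) (V0 \ T₂) M₂) :
    ∃ x, (x = b ∨ x = c) ∧ (x ∈ T₁ ↔ a ∈ T₁) ∧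
      IsPM (delVerts G (T₁ ∆ {a, x})) (V0 \ (T₁ ∆ {a, x})) (swap a (M₁, M₂)).1 ∧
      IsPM (delVerts G (T₂ ∆ {a, x})) (V0 \ (T₂ ∆ {a, x})) (swap a (M₁, M₂)).2 := by
  obtain ⟨x, hx, hxT, hreach⟩ := exists_partner_of_isPM h hT hT₁₂ h₁ h₂
  have hK : ∀ v ∈ T₁ ∪ T₂, (toGraph (M₁ ∆ M₂)).Reachable a v ↔ v = a ∨ v = x :=
    fun v hv => hreach v (hT ▸ hv)
  have ha : a ∈ T₁ ∪ T₂ := hT ▸ by simp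
  have hx' : x ∈ T₁ ∪ T₂ := hT ▸ by rcases hx with rfl | rfl <;> simp
  refine ⟨x, hx, hxT, isPM_symmDiff_component h.mem_of_mem_edgeSet h₁ h₂ a fun v =>
    mem_symmDiff_pair_iff hT₁₂ hK ha hx', ?_⟩
  have := isPM_symmDiff_component h.mem_of_mem_edgeSet h₂ h₁ a (T := T₂ ∆ {a, x}) fun v => by
    rw [Set.union_comm] at hK ha hx'
    rw [symmDiff_comm M₂ M₁]
    exact mem_symmDiff_pair_iff hT₁₂.symm hK ha hx'
  rwa [symmDiff_comm M₂ M₁] at this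

theorem swap_isPM_of_isPM_empty (h : IsBipartiteFace G V0 γ a b c d)
    (h₁ : IsPM (delVerts G ∅) (V0 \ ∅) M₁)
    (h₂ : IsPM (delVerts G {a, b, c, d}) (V0 \ {a, b, c, d}) M₂) :
    (IsPM (delVerts G {a, b}) (V0 \ {a, b}) (swap a (M₁, M₂)).1 ∧
        IsPM (delVerts G {c, d}) (V0 \ {c, d}) (swap a (M₁, M₂)).2) ∨
      (IsPM (delVerts G {a, c}) (V0 \ {a, c}) (swap a (M₁, M₂)).1 ∧
        IsPM (delVerts G {b, d}) (V0 \ {b, d}) (swap a (M₁, M₂)).2) := by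
  obtain ⟨x, hx, -, h₁, h₂⟩ :=
    swap_isPM h (Set.empty_union _) (Set.empty_disjoint _) h₁ h₂
  have := h.ne_ab
  have := h.ne_ac
  have := h.ne_ad
  have := h.ne_bc
  have := h.ne_bd
  have := h.ne_cd
  rcases hx with rfl | rfl
  · have e : ({a, x, c, d} : Set V) ∆ {a, x} = {c, d} := by ext; simp [Set.mem_symmDiff]; grind
    rw [show (∅ : Set V) ∆ {a, x} = {a, x} by simp] at h₁
    rw [e] at h₂
    exact Or.inl ⟨h₁, h₂⟩
  · have e : ({a, b, x, d} : Set V) ∆ {a, x} = {b, d} := by ext; simp [Set.mem_symmDiff]; grind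
    rw [show (∅ : Set V) ∆ {a, x} = {a, x} by simp] at h₁
    rw [e] at h₂
    exact Or.inr ⟨h₁, h₂⟩

theorem swap_isPM_empty_of_isPM (h : IsBipartiteFace G V0 γ a b c d) {y z : V}
    (hyz : y = b ∧ z = c ∨ y = c ∧ z = b) (h₁ : IsPM (delVerts G {a, y}) (V0 \ {a, y}) M₁)
    (h₂ : IsPM (delVerts G {z, d}) (V0 \ {z, d}) M₂) :
    IsPM (delVerts G ∅) (V0 \ ∅) (swap a (M₁, M₂)).1 ∧
      IsPM (delVerts G {a, b, c, d}) (V0 \ {a, b, c, d}) (swap a (M₁, M₂)).2 := by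
  have := h.ne_ab
  have := h.ne_ac
  have := h.ne_ad
  have := h.ne_bc
  have := h.ne_bd
  have := h.ne_cd
  obtain ⟨x, hx, hxT, h₁, h₂⟩ := swap_isPM h (by ext; simp; grind)
    (Set.disjoint_left.mpr (by simp; grind)) h₁ h₂
  obtain rfl : x = y := by simp at hxT; grind
  have e : ({z, d} : Set V) ∆ {a, x} = {a, b, c, d} := by ext; simp [Set.mem_symmDiff]; grind
  rw [symmDiff_self] at h₁
  rw [e] at h₂
  exact ⟨h₁, h₂⟩

theorem condensation (hV0 : V0.Finite) (h : IsBipartiteFace G V0 γ a b c d) (ω : Sym2 V → ℝ) :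
    mSum G V0 ω * mSum (delVerts G {a, b, c, d}) (V0 \ {a, b, c, d}) ω =
      mSum (delVerts G {a, b}) (V0 \ {a, b}) ω * mSum (delVerts G {c, d}) (V0 \ {c, d}) ω +
        mSum (delVerts G {a, c}) (V0 \ {a, c}) ω * mSum (delVerts G {b, d}) (V0 \ {b, d}) ω := by
  have hfin := finite_setOf_isPM hV0 h.mem_of_mem_edgeSet
  set PM := fun T => (hfin T).toFinset
  have hsum : ∀ T, mSum (delVerts G T) (V0 \ T) ω = ∑ M ∈ PM T, ∏ e ∈ M, ω e :=
    fun T => finsum_mem_eq_finite_toFinset_sum _ (hfin T)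
  have hmem : ∀ {T M}, M ∈ PM T ↔ IsPM (delVerts G T) (V0 \ T) M := (hfin _).mem_toFinset
  have hdisj : Disjoint (PM {a, b} ×ˢ PM {c, d}) (PM {a, c} ×ˢ PM {b, d}) := by
    refine disjoint_left.mpr fun M h₁ h₂ => ?_
    rw [mem_product, hmem, hmem, isPM_delVerts_iff h.mem_of_mem_edgeSet] at h₁ h₂
    have hc := (h₁.1.2 c).symm.trans (h₂.1.2 c)
    have hcV : c ∈ V0 := h.subset (by simp)
    simp [hcV, h.ne_ac.symm, h.ne_bc.symm] at hc
  have hG : mSum G V0 ω = mSum (delVerts G ∅) (V0 \ ∅) ω := by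
    rw [delVerts_empty, Set.sdiff_empty]
  rw [hG]
  simp only [hsum, sum_mul_sum, ← sum_product']
  rw [← sum_union hdisj]
  refine sum_nbij' (swap a) (swap a) ?_ ?_ (fun M _ => swap_swap a M) (fun M _ => swap_swap a M)
    (fun M _ => (prod_swap ω a M).symm)
  · rintro ⟨M₁, M₂⟩ hM
    simp only [mem_union, mem_product, hmem] at hM ⊢
    exact swap_isPM_of_isPM_empty h hM.1 hM.2
  · rintro ⟨M₁, M₂⟩ hM
    simp only [mem_union, mem_product, hmem] at hM ⊢
    rcases hM with hM | hM
    · exact swap_isPM_empty_of_isPM h (Or.inl ⟨rfl, rfl⟩) hM.1 hM.2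
    · exact swap_isPM_empty_of_isPM h (Or.inr ⟨rfl, rfl⟩) hM.1 hM.2

end Faces

section Jordan

def Rises (e : Sym2 (ℤ × ℤ)) (l u : ℤ × ℤ) : Prop := e = s(l, u) ∧ u.2 = l.2 + 1

lemma Rises.unique {e : Sym2 (ℤ × ℤ)} {l u l' u' : ℤ × ℤ} (h : Rises e l u) (h' : Rises e l' u') :
    l = l' ∧ u = u' := by
  obtain ⟨rfl, hu⟩ := h
  rcases Sym2.eq_iff.mp h'.1 with ⟨h₁, h₂⟩ | ⟨rfl, rfl⟩
  · exact ⟨h₁, h₂⟩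
  · have := h'.2
    omega

/-- The odd endpoint keeps a segment from crossing a diagonal step between odd points. -/
def IsSegment (e : Sym2 (ℤ × ℤ)) : Prop :=
  ∃ l u, Rises e l u ∧ (u.1 - l.1) ^ 2 ≤ 1 ∧ (Odd (l.1 + l.2) ∨ Odd (u.1 + u.2))

def startsLeftOf (C : Finset (Sym2 (ℤ × ℤ))) (z : ℤ × ℤ) : ℕ :=
  #{e ∈ C | ∃ l u, Rises e l u ∧ l.2 = z.2 ∧ l.1 < z.1}

def endsLeftOf (C : Finset (Sym2 (ℤ × ℤ))) (z : ℤ × ℤ) : ℕ :=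
  #{e ∈ C | ∃ l u, Rises e l u ∧ u.2 = z.2 ∧ u.1 < z.1}

variable {C : Finset (Sym2 (ℤ × ℤ))}

lemma even_startsLeftOf_add_endsLeftOf (hC : ∀ e ∈ C, IsSegment e)
    (heven : ∀ v, Even (deg C v)) (z : ℤ × ℤ) : Even (startsLeftOf C z + endsLeftOf C z) := by
  set R : ℤ × ℤ → Prop := fun v => v.2 = z.2 ∧ v.1 < z.1
  have hsum := sum_deg_mul (D := C) (fun e he v hv => mem_verts.mpr ⟨e, he, hv⟩)
    (fun v => if R v then (1 : ℕ) else 0)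
  have hedge : ∀ e ∈ C, ∑ v ∈ e.toFinset, (if R v then (1 : ℕ) else 0) =
      (if ∃ l u, Rises e l u ∧ R l then 1 else 0) + (if ∃ l u, Rises e l u ∧ R u then 1 else 0) := by
    intro e he
    obtain ⟨l, u, hlu, -⟩ := hC e he
    have hl : (∃ l' u', Rises e l' u' ∧ R l') ↔ R l :=
      ⟨fun ⟨l', u', h, hR⟩ => (hlu.unique h).1 ▸ hR, fun hR => ⟨l, u, hlu, hR⟩⟩
    have hu : (∃ l' u', Rises e l' u' ∧ R u') ↔ R u :=
      ⟨fun ⟨l', u', h, hR⟩ => (hlu.unique h).2 ▸ hR, fun hR => ⟨l, u, hlu, hR⟩⟩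
    obtain ⟨rfl, hy⟩ := hlu
    rw [sum_toFinset_of_not_isDiag (by simp [Prod.ext_iff, hy]), if_congr hl rfl rfl,
      if_congr hu rfl rfl]
  rw [sum_congr rfl hedge, sum_add_distrib, ← card_filter, ← card_filter] at hsum
  rw [startsLeftOf, endsLeftOf, ← hsum]
  exact even_sum _ fun v _ => (heven v).mul_right _

lemma endsLeftOf_eq_startsLeftOf (hC : ∀ e ∈ C, IsSegment e) {z w : ℤ × ℤ} (hz : z ∉ verts C)
    (hw : w ∉ verts C) (hzodd : Odd (z.1 + z.2)) (hy : w.2 = z.2 + 1) (hx : (w.1 - z.1) ^ 2 = 1) :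
    endsLeftOf C w = startsLeftOf C z := by
  unfold endsLeftOf startsLeftOf
  congr 1
  refine filter_congr fun e he => ?_
  obtain ⟨l, u, hlu, hwidth, hodd⟩ := hC e he
  have hl : l ∈ verts C := mem_verts.mpr ⟨e, he, hlu.1 ▸ Sym2.mem_mk_left l u⟩
  have hu : u ∈ verts C := mem_verts.mpr ⟨e, he, hlu.1 ▸ Sym2.mem_mk_right l u⟩
  have hlz : l ≠ z := fun h => hz (h ▸ hl)
  have huw : u ≠ w := fun h => hw (h ▸ hu)
  have hlw : l ≠ w := fun h => hw (h ▸ hl)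
  have hw₁ : w.1 = z.1 + 1 ∨ w.1 = z.1 - 1 := by
    rcases sq_eq_one_iff.mp hx with h | h <;> [left; right] <;> linarith
  have hwidth' : -1 ≤ u.1 - l.1 ∧ u.1 - l.1 ≤ 1 := by constructor <;> nlinarith
  simp only [ne_eq, Prod.ext_iff, not_and_or] at hlz huw hlw
  rw [Int.odd_iff, Int.odd_iff] at hodd
  rw [Int.odd_iff] at hzodd
  have := hlu.2
  constructor
  · rintro ⟨l', u', h, h₂, h₁⟩
    obtain ⟨rfl, rfl⟩ := hlu.unique h
    exact ⟨_, _, hlu, by omega, by omega⟩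
  · rintro ⟨l', u', h, h₂, h₁⟩
    obtain ⟨rfl, rfl⟩ := hlu.unique h
    exact ⟨_, _, hlu, by omega, by omega⟩

lemma startsLeftOf_mod_two_eq (hC : ∀ e ∈ C, IsSegment e) (heven : ∀ v, Even (deg C v))
    {z w : ℤ × ℤ} (hz : z ∉ verts C) (hw : w ∉ verts C) (hzodd : Odd (z.1 + z.2))
    (hy : w.2 = z.2 + 1) (hx : (w.1 - z.1) ^ 2 = 1) :
    startsLeftOf C w % 2 = startsLeftOf C z % 2 := by
  have h := even_startsLeftOf_add_endsLeftOf hC heven w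
  rw [endsLeftOf_eq_startsLeftOf hC hz hw hzodd hy hx] at h
  obtain ⟨k, hk⟩ := h
  omega

lemma startsLeftOf_mod_two_eq_of_reachable (hC : ∀ e ∈ C, IsSegment e)
    (heven : ∀ v, Even (deg C v)) {Q : Finset (Sym2 (ℤ × ℤ))}
    (hQ : ∀ c w, s(c, w) ∈ Q →
      (c.1 - w.1) ^ 2 = 1 ∧ (c.2 - w.2) ^ 2 = 1 ∧ Odd (c.1 + c.2) ∧ Odd (w.1 + w.2))
    (hQC : Disjoint (verts Q) (verts C)) {z z' : ℤ × ℤ} (h : (toGraph Q).Reachable z z') :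
    startsLeftOf C z % 2 = startsLeftOf C z' % 2 := by
  rw [reachable_iff_reflTransGen] at h
  induction h with
  | refl => rfl
  | @tail c w _ hcw ih =>
    obtain ⟨hcwQ, -⟩ := (fromEdgeSet_adj _).mp hcw
    obtain ⟨hx, hy, hc, hw⟩ := hQ c w hcwQ
    have hcC : c ∉ verts C :=
      disjoint_left.mp hQC (mem_verts.mpr ⟨_, hcwQ, Sym2.mem_mk_left c w⟩)
    have hwC : w ∉ verts C :=
      disjoint_left.mp hQC (mem_verts.mpr ⟨_, hcwQ, Sym2.mem_mk_right c w⟩)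
    rw [ih]
    rcases sq_eq_one_iff.mp hy with h | h
    · exact startsLeftOf_mod_two_eq hC heven hwC hcC hw (by omega) hx
    · exact (startsLeftOf_mod_two_eq hC heven hcC hwC hc (by omega) (by linear_combination hx)).symm

lemma startsLeftOf_add_one {p q : ℤ} (hW : (p - 1, q) ∉ verts C)
    (hv : s((p, q), (p, q + 1)) ∈ C)
    (hcentre : ∀ e ∈ C, ∀ u, Rises e (p, q) u → e = s((p, q), (p, q + 1))) :
    startsLeftOf C (p + 1, q) = startsLeftOf C (p - 1, q) + 1 := by
  have hrise : Rises s((p, q), (p, q + 1)) (p, q) (p, q + 1) := ⟨rfl, rfl⟩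
  have hnot : s((p, q), (p, q + 1)) ∉ {e ∈ C | ∃ l u, Rises e l u ∧ l.2 = q ∧ l.1 < p - 1} := by
    simp only [mem_filter, not_and]
    rintro - ⟨l, u, h, -, hl⟩
    obtain ⟨rfl, -⟩ := hrise.unique h
    exact (lt_irrefl p) (hl.trans (sub_one_lt p))
  unfold startsLeftOf
  rw [← card_insert_of_notMem hnot]
  congr 1
  ext e
  simp only [mem_insert, mem_filter]
  constructor
  · rintro ⟨he, l, u, h, hl₂, hl₁⟩
    by_cases hlt : l.1 < p - 1
    · exact Or.inr ⟨he, l, u, h, hl₂, hlt⟩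
    · left
      have hl : l ∈ verts C := mem_verts.mpr ⟨e, he, h.1 ▸ Sym2.mem_mk_left l u⟩
      obtain hl₁' | hl₁' : l.1 = p - 1 ∨ l.1 = p := by omega
      · have : l = (p - 1, q) := Prod.ext hl₁' hl₂
        exact absurd (this ▸ hl) hW
      · have : l = (p, q) := Prod.ext hl₁' hl₂
        exact hcentre e he u (this ▸ h)
  · rintro (rfl | ⟨he, l, u, h, hl₂, hl₁⟩)
    · exact ⟨hv, _, _, hrise, rfl, by simp⟩
    · exact ⟨he, l, u, h, hl₂, by omega⟩

def closeThrough (P : Finset (Sym2 (ℤ × ℤ))) (p q : ℤ) : Finset (Sym2 (ℤ × ℤ)) :=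
  insert s((p, q), (p, q + 1)) (insert s((p, q - 1), (p, q)) P)

variable {P : Finset (Sym2 (ℤ × ℤ))} {p q : ℤ}

lemma mem_closeThrough {e : Sym2 (ℤ × ℤ)} :
    e ∈ closeThrough P p q ↔ e = s((p, q), (p, q + 1)) ∨ e = s((p, q - 1), (p, q)) ∨ e ∈ P := by
  simp [closeThrough]

lemma even_deg_closeThrough (hcentre : ∀ e ∈ P, (p, q) ∉ e)
    (hodd : ∀ v, Odd (deg P v) ↔ v = (p, q + 1) ∨ v = (p, q - 1)) (v : ℤ × ℤ) :
    Even (deg (closeThrough P p q) v) := by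
  have h₁ : s((p, q - 1), (p, q)) ∉ P := fun h => hcentre _ h (Sym2.mem_mk_right _ _)
  have h₂ : s((p, q), (p, q + 1)) ∉ insert s((p, q - 1), (p, q)) P := by
    rw [mem_insert, not_or]
    exact ⟨by simp; omega, fun h => hcentre _ h (Sym2.mem_mk_left _ _)⟩
  rw [closeThrough, deg_insert h₂, deg_insert h₁]
  have h := hodd v
  have hO : v = (p, q) → deg P v = 0 := by
    rintro rfl
    exact deg_eq_zero_iff.mpr fun h => by
      obtain ⟨e, he, hve⟩ := mem_verts.mp h
      exact hcentre e he hve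
  simp only [Sym2.mem_iff, Prod.ext_iff, Nat.odd_iff, Nat.even_iff] at h hO ⊢
  split_ifs <;> omega

lemma isSegment_closeThrough (hP : ∀ e ∈ P, IsSegment e) (hpq : Even (p + q)) :
    ∀ e ∈ closeThrough P p q, IsSegment e := by
  rw [Int.even_iff] at hpq
  intro e he
  rcases mem_closeThrough.mp he with rfl | rfl | he
  · exact ⟨(p, q), (p, q + 1), ⟨rfl, rfl⟩, by simp, Or.inr (Int.odd_iff.mpr (by simp; omega))⟩
  · exact ⟨(p, q - 1), (p, q), ⟨rfl, by simp⟩, by simp, Or.inl (Int.odd_iff.mpr (by simp; omega))⟩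
  · exact hP e he

lemma mem_verts_closeThrough {v : ℤ × ℤ} (hv : v ∈ verts (closeThrough P p q)) :
    v ∈ verts P ∨ v = (p, q + 1) ∨ v = (p, q) ∨ v = (p, q - 1) := by
  obtain ⟨e, he, hve⟩ := mem_verts.mp hv
  rcases mem_closeThrough.mp he with rfl | rfl | he
  · rcases Sym2.mem_iff.mp hve with rfl | rfl <;> simp
  · rcases Sym2.mem_iff.mp hve with rfl | rfl <;> simp
  · exact Or.inl (mem_verts.mpr ⟨e, he, hve⟩)

lemma eq_of_rises_closeThrough (hcentre : ∀ e ∈ P, (p, q) ∉ e) :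
    ∀ e ∈ closeThrough P p q, ∀ u, Rises e (p, q) u → e = s((p, q), (p, q + 1)) := by
  intro e he u h
  rcases mem_closeThrough.mp he with rfl | rfl | he
  · rfl
  · have hr : Rises s((p, q - 1), (p, q)) (p, q - 1) (p, q) := ⟨rfl, by simp⟩
    have := (hr.unique h).1
    simp at this
  · exact absurd (h.1 ▸ Sym2.mem_mk_left _ _) (hcentre e he)

/-- Closing a chain from `(p, q + 1)` to `(p, q - 1)` through `(p, q)` gives a cycle; the
horizontal ray from `(p + 1, q)` crosses it once more than the one from `(p - 1, q)`, so the two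
points lie on opposite sides and no diagonal path avoiding the chain joins them. -/
theorem not_reachable_of_chain (hP : ∀ e ∈ P, IsSegment e) (hcentre : ∀ e ∈ P, (p, q) ∉ e)
    (hpq : Even (p + q)) (hodd : ∀ v, Odd (deg P v) ↔ v = (p, q + 1) ∨ v = (p, q - 1))
    {Q : Finset (Sym2 (ℤ × ℤ))} (hQ : ∀ c w, s(c, w) ∈ Q →
      (c.1 - w.1) ^ 2 = 1 ∧ (c.2 - w.2) ^ 2 = 1 ∧ Odd (c.1 + c.2) ∧ Odd (w.1 + w.2))
    (hdisj : Disjoint (verts P) (verts Q)) : ¬ (toGraph Q).Reachable (p - 1, q) (p + 1, q) := by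
  intro hWE
  rw [Int.even_iff] at hpq
  have hQC : Disjoint (verts Q) (verts (closeThrough P p q)) := by
    refine disjoint_left.mpr fun v hvQ hvC => ?_
    have hvP : v ∉ verts P := disjoint_right.mp hdisj hvQ
    obtain ⟨e, he, hve⟩ := mem_verts.mp hvQ
    induction e using Sym2.ind with
    | _ x y =>
      have hodd' := Int.odd_iff.mp (by
        rcases Sym2.mem_iff.mp hve with rfl | rfl
        exacts [(hQ _ _ he).2.2.1, (hQ _ _ he).2.2.2] : Odd (v.1 + v.2))
      rcases mem_verts_closeThrough hvC with h | rfl | rfl | rfl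
      · exact hvP h
      · exact hvP (mem_verts_of_odd_deg ((hodd _).mpr (Or.inl rfl)))
      · simp only at hodd'
        omega
      · exact hvP (mem_verts_of_odd_deg ((hodd _).mpr (Or.inr rfl)))
  have hW : (p - 1, q) ∉ verts (closeThrough P p q) :=
    disjoint_left.mp hQC (mem_verts_of_reachable hWE (by simp only [ne_eq, Prod.mk.injEq]; omega))
  have h₁ := startsLeftOf_mod_two_eq_of_reachable (isSegment_closeThrough hP (Int.even_iff.mpr hpq))
    (even_deg_closeThrough hcentre hodd) hQ hQC hWE
  have h₂ := startsLeftOf_add_one hW (mem_insert_self _ _) (eq_of_rises_closeThrough hcentre)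
  omega

end Jordan

section Aztec

lemma sq_eq_one_of_sq_add_sq_eq_two {x y : ℤ} (h : x ^ 2 + y ^ 2 = 2) :
    x ^ 2 = 1 ∧ y ^ 2 = 1 := by
  have hx : -1 ≤ x ∧ x ≤ 1 := by constructor <;> nlinarith [sq_nonneg y]
  have hy : -1 ≤ y ∧ y ≤ 1 := by constructor <;> nlinarith [sq_nonneg x]
  obtain ⟨hx₁, hx₂⟩ := hx
  obtain ⟨hy₁, hy₂⟩ := hy
  interval_cases x <;> interval_cases y <;> simp_all

variable {n : ℕ}

lemma aztec_adj {u v : ℤ × ℤ} (h : (aztec n).Adj u v) :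
    (u.1 - v.1) ^ 2 = 1 ∧ (u.2 - v.2) ^ 2 = 1 ∧ Odd (u.1 + u.2) ∧ Odd (v.1 + v.2) :=
  have h' := sq_eq_one_of_sq_add_sq_eq_two h.2.2
  ⟨h'.1, h'.2, h.1.1, h.2.1.1⟩

lemma isSegment_of_aztec_adj {u v : ℤ × ℤ} (h : (aztec n).Adj u v) : IsSegment s(u, v) := by
  obtain ⟨hx, hy, hu, hv⟩ := aztec_adj h
  rcases sq_eq_one_iff.mp hy with h | h
  · exact ⟨v, u, ⟨Sym2.eq_swap, by omega⟩, by nlinarith, Or.inl hv⟩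
  · exact ⟨u, v, ⟨rfl, by omega⟩, by nlinarith, Or.inl hu⟩

lemma mem_aztecSet_of_mem_edgeSet : ∀ e ∈ (aztec n).edgeSet, ∀ v ∈ e, v ∈ aztecSet n := by
  intro e he v hv
  induction e using Sym2.ind with
  | _ u w =>
    rcases Sym2.mem_iff.mp hv with rfl | rfl
    exacts [he.1, he.2.1]

lemma aztecSet_finite (n : ℕ) : (aztecSet n).Finite :=
  ((Set.finite_Icc (-(n : ℤ)) n).prod (Set.finite_Icc (-(n : ℤ)) n)).subset fun _ hv =>
    ⟨abs_le.mp hv.2.1, abs_le.mp hv.2.2⟩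

theorem aztec_faceSeparating {p q : ℤ} (hpq : Even (p + q)) :
    FaceSeparating (aztec n) (p, q + 1) (p - 1, q) (p + 1, q) (p, q - 1) := by
  intro P Q hP hQ hodd hWE hdisj
  refine not_reachable_of_chain (fun e he => ?_) (fun e he hpq' => ?_) hpq hodd
    (fun c w h => aztec_adj (hQ h)) hdisj hWE
  · induction e using Sym2.ind with
    | _ u w => exact isSegment_of_aztec_adj (hP he)
  · exact Int.not_odd_iff_even.mpr hpq (mem_aztecSet_of_mem_edgeSet e (hP he) _ hpq').1

theorem aztec_isBipartiteFace {p q : ℤ} (hc : IsCellCenter n p q) :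
    IsBipartiteFace (aztec n) (aztecSet n) (fun v => (v.1 : ZMod 2))
      (p, q + 1) (p - 1, q) (p + 1, q) (p, q - 1) := by
  obtain ⟨hp, hq, hpn, hqn⟩ := hc
  rw [abs_le] at hpn hqn
  have h2 : (2 : ZMod 2) = 0 := rfl
  refine ⟨mem_aztecSet_of_mem_edgeSet, fun u v h => ?_, by push_cast; linear_combination -h2,
    by push_cast; ring, rfl, by simp; omega, by simp; omega, ?_,
    aztec_faceSeparating (Int.even_iff.mpr (by omega))⟩
  · have hodd : Odd (u.1 + v.1) := by
      rcases sq_eq_one_iff.mp (aztec_adj h).1 with h | h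
      · exact ⟨v.1, by omega⟩
      · exact ⟨u.1, by omega⟩
    exact_mod_cast hodd.intCast_zmod_two
  · intro v hv
    simp only [Set.mem_insert_iff, Set.mem_singleton_iff] at hv
    rcases hv with rfl | rfl | rfl | rfl <;>
      exact ⟨Int.odd_iff.mpr (by omega), abs_le.mpr ⟨by omega, by omega⟩,
        abs_le.mpr ⟨by omega, by omega⟩⟩

end Aztec

end AztecCondensation

end

theorem aztec_condensation_general (n : ℕ) (ω : Sym2 (ℤ × ℤ) → ℝ)
    (p q : ℤ) (hc : IsCellCenter n p q) :
    mSum (aztec n) (aztecSet n) ω *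
        aztecDel n ω {(p, q + 1), (p - 1, q), (p + 1, q), (p, q - 1)}
      = aztecDel n ω {(p, q + 1), (p - 1, q)} * aztecDel n ω {(p + 1, q), (p, q - 1)}
        + aztecDel n ω {(p, q + 1), (p + 1, q)} * aztecDel n ω {(p - 1, q), (p, q - 1)} :=
  AztecCondensation.condensation (AztecCondensation.aztecSet_finite n)
    (AztecCondensation.aztec_isBipartiteFace hc) ω

/-- **Condensation identity for a cell of the Aztec diamond**: for a cell with
center `(p, q)` and vertices `N, W, E, S`,
`M(A_n)·M(A_n − {N,W,E,S}) = M(A_n − {N,W})·M(A_n − {E,S}) + M(A_n − {N,E})·M(A_n − {W,S})`. -/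
theorem aztec_condensation (n : ℕ) (ω : Sym2 (ℤ × ℤ) → ℝ)
    (hnonneg : ∀ e ∈ (aztec n).edgeSet, 0 ≤ ω e)
    (p q : ℤ) (hc : IsCellCenter n p q) :
    mSum (aztec n) (aztecSet n) ω *
        aztecDel n ω {(p, q + 1), (p - 1, q), (p + 1, q), (p, q - 1)}
      = aztecDel n ω {(p, q + 1), (p - 1, q)} * aztecDel n ω {(p + 1, q), (p, q - 1)}
        + aztecDel n ω {(p, q + 1), (p + 1, q)} * aztecDel n ω {(p - 1, q), (p, q - 1)} :=
  aztec_condensation_general n ω p q hc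
end

section
/- For every perfect matching M of the Aztec diamond graph A_n, every cell of A_n contains 0, 1, or 2 edges of M, and the cell matrix of M is an n×n alternating-sign matrix. -/
open scoped Classical

/-- The number of edges of the finset `M` that are edges of the cell with
center `(p, q)`. -/
def cellEdgeCount (M : Finset (Sym2 (ℤ × ℤ))) (p q : ℤ) : ℕ :=
  (M.filter fun e => e = nwEdge p q ∨ e = neEdge p q ∨ e = swEdge p q ∨ e = seEdge p q).card

/-- The center of the cell of the Aztec diamond graph of order `n` sitting in row
`i` (rows indexed by decreasing `q`-coordinate) and column `j` (columns indexed by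
increasing `p`-coordinate). -/
def cellCenter (n : ℕ) (i j : Fin n) : ℤ × ℤ :=
  (2 * (j : ℤ) - (n : ℤ) + 1, (n : ℤ) - 1 - 2 * (i : ℤ))

/-- The cell matrix of a finset `M` of edges of the Aztec diamond graph of order
`n`: the entry at a cell is the number of edges of `M` contained in that cell,
minus `1`. -/
def cellMatrix (n : ℕ) (M : Finset (Sym2 (ℤ × ℤ))) : Matrix (Fin n) (Fin n) ℤ :=
  fun i j => (cellEdgeCount M (cellCenter n i j).1 (cellCenter n i j).2 : ℤ) - 1

/-- `A` is an alternating-sign matrix: the entries lie in `{−1, 0, 1}` and in every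
row and in every column the nonzero entries alternate in sign and sum to `1`
(equivalently, all partial sums along a row or a column are `0` or `1`, and the
complete row and column sums are `1`). -/
def IsASM {n : ℕ} (A : Matrix (Fin n) (Fin n) ℤ) : Prop :=
  (∀ i j, A i j ∈ ({-1, 0, 1} : Set ℤ)) ∧
  (∀ i k, (∑ j ∈ Finset.Iic k, A i j) ∈ ({0, 1} : Set ℤ)) ∧
  (∀ i, (∑ j, A i j) = 1) ∧
  (∀ j k, (∑ i ∈ Finset.Iic k, A i j) ∈ ({0, 1} : Set ℤ)) ∧
  (∀ j, (∑ i, A i j) = 1)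

/-!
Every vertex of the Aztec diamond is matched either to the west or to the east. A cell contains
one matched edge at its west corner exactly when that corner is matched east, and one at its east
corner exactly when that corner is matched west, and no others. Writing `w(v) ∈ {0, 1}` for
"`v` is matched west", the entry of a cell is therefore `w(east corner) - w(west corner)`, so a
partial row sum telescopes to `w(v) - w(western tip) = w(v) ∈ {0, 1}` for some vertex `v` of the
row; the full row sum is `w(eastern tip) = 1`, since a tip can only be matched inwards. The
reflection in the antidiagonal is an automorphism of the diamond that transposes the cell matrix,
so the columns follow from the rows.
-/

open Finset
open scoped Matrix

/-- `r i m` plays the role of the sum of the first `m` entries of row `i` of `A`. -/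
structure IsRowPrimitive {n : ℕ} (A : Matrix (Fin n) (Fin n) ℤ) (r : Fin n → ℕ → ℤ) : Prop where
  mem_zero_one : ∀ i m, r i m ∈ ({0, 1} : Set ℤ)
  apply_zero : ∀ i, r i 0 = 0
  apply_n : ∀ i, r i n = 1
  entry_eq_sub : ∀ i j, A i j = r i (j + 1) - r i j

lemma Fin.sum_Iic_eq_sum_range {M : Type*} [AddCommMonoid M] {n : ℕ} (f : ℕ → M) (k : Fin n) :
    ∑ j ∈ Iic k, f j = ∑ m ∈ range (k + 1), f m := by
  rw [Nat.range_succ_eq_Iic, ← Fin.map_valEmbedding_Iic, sum_map]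
  rfl

namespace IsRowPrimitive

variable {n : ℕ} {A : Matrix (Fin n) (Fin n) ℤ} {r : Fin n → ℕ → ℤ}

lemma entry_mem (h : IsRowPrimitive A r) (i j : Fin n) : A i j ∈ ({-1, 0, 1} : Set ℤ) := by
  rw [h.entry_eq_sub]
  rcases h.mem_zero_one i (j + 1) with h₁ | h₁ <;> rcases h.mem_zero_one i j with h₂ | h₂ <;>
    simp_all

lemma sum_Iic (h : IsRowPrimitive A r) (i k : Fin n) : ∑ j ∈ Iic k, A i j = r i (k + 1) := by
  simp only [h.entry_eq_sub]
  rw [Fin.sum_Iic_eq_sum_range (fun m => r i (m + 1) - r i m), sum_range_sub, h.apply_zero,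
    sub_zero]

lemma sum_univ (h : IsRowPrimitive A r) (i : Fin n) : ∑ j, A i j = 1 := by
  simp only [h.entry_eq_sub]
  rw [Fin.sum_univ_eq_sum_range (fun m => r i (m + 1) - r i m), sum_range_sub, h.apply_zero,
    h.apply_n, sub_zero]

theorem isASM {c : Fin n → ℕ → ℤ} (hr : IsRowPrimitive A r) (hc : IsRowPrimitive Aᵀ c) :
    IsASM A :=
  ⟨hr.entry_mem, fun i k => hr.sum_Iic i k ▸ hr.mem_zero_one i _, hr.sum_univ,
    fun j k => hc.sum_Iic j k ▸ hc.mem_zero_one j _, hc.sum_univ⟩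

end IsRowPrimitive

section Matching

variable {V W : Type} {G : SimpleGraph V} {S : Set V} {M : Finset (Sym2 V)}

lemma IsPM.eq_of_mk_mem_of_mk_mem (hM : IsPM G S M) {v w₁ w₂ : V} (hv : v ∈ S)
    (h₁ : s(v, w₁) ∈ M) (h₂ : s(v, w₂) ∈ M) : w₁ = w₂ :=
  Sym2.congr_right.mp <| (hM.2 v hv).unique ⟨h₁, Sym2.mem_mk_left _ _⟩ ⟨h₂, Sym2.mem_mk_left _ _⟩

lemma IsPM.image [DecidableEq W] {G' : SimpleGraph W} (φ : G ↪g G') (hM : IsPM G S M) :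
    IsPM G' (φ '' S) (M.image (Sym2.map φ)) := by
  refine ⟨?_, ?_⟩
  · simp only [Finset.mem_image]
    rintro _ ⟨e, he, rfl⟩
    exact φ.map_mem_edgeSet_iff.mpr (hM.1 e he)
  · rintro _ ⟨v, hv, rfl⟩
    obtain ⟨e, ⟨he, hve⟩, huniq⟩ := hM.2 v hv
    refine ⟨e.map φ, ⟨Finset.mem_image_of_mem _ he, Sym2.mem_map.mpr ⟨v, hve, rfl⟩⟩, ?_⟩
    rintro _ ⟨hmem, hve'⟩
    obtain ⟨e', he', rfl⟩ := Finset.mem_image.mp hmem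
    obtain ⟨u, hu, huv⟩ := Sym2.mem_map.mp hve'
    rw [huniq e' ⟨he', φ.injective huv ▸ hu⟩]

end Matching

lemma Int.abs_eq_one_of_sq_add_sq_eq_two {x y : ℤ} (h : x ^ 2 + y ^ 2 = 2) : |x| = 1 ∧ |y| = 1 := by
  have hx : -2 < x ∧ x < 2 := by constructor <;> nlinarith [sq_nonneg y]
  have hy : -2 < y ∧ y < 2 := by constructor <;> nlinarith [sq_nonneg x]
  obtain ⟨hx₁, hx₂⟩ := hx
  obtain ⟨hy₁, hy₂⟩ := hy
  interval_cases x <;> interval_cases y <;> simp_all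

lemma aztec_adj_iff {n : ℕ} {u v : ℤ × ℤ} :
    (aztec n).Adj u v ↔ u ∈ aztecSet n ∧ v ∈ aztecSet n ∧ |u.1 - v.1| = 1 ∧ |u.2 - v.2| = 1 := by
  refine ⟨fun ⟨hu, hv, h⟩ => ⟨hu, hv, Int.abs_eq_one_of_sq_add_sq_eq_two h⟩, ?_⟩
  rintro ⟨hu, hv, h₁, h₂⟩
  refine ⟨hu, hv, ?_⟩
  rw [← sq_abs (u.1 - v.1), ← sq_abs (u.2 - v.2), h₁, h₂]
  norm_num

def MatchedToward (M : Finset (Sym2 (ℤ × ℤ))) (d : ℤ) (v : ℤ × ℤ) : Prop :=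
  ∃ w, s(v, w) ∈ M ∧ w.1 = v.1 + d

section AztecMatching

variable {n : ℕ} {M : Finset (Sym2 (ℤ × ℤ))}

lemma matchedToward_neg_one_iff (hM : IsPM (aztec n) (aztecSet n) M) {v : ℤ × ℤ}
    (hv : v ∈ aztecSet n) : MatchedToward M (-1) v ↔ ¬MatchedToward M 1 v := by
  constructor
  · rintro ⟨w₁, h₁, hw₁⟩ ⟨w₂, h₂, hw₂⟩
    have := congrArg Prod.fst (hM.eq_of_mk_mem_of_mk_mem hv h₁ h₂)
    omega
  · intro hR
    obtain ⟨e, ⟨he, hve⟩, -⟩ := hM.2 v hv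
    obtain ⟨w, rfl⟩ := Sym2.mem_iff_exists.mp hve
    have hvw : |v.1 - w.1| = 1 := (aztec_adj_iff.mp (hM.1 _ he)).2.2.1
    rcases (abs_eq zero_le_one).mp hvw with h | h
    · exact ⟨w, he, by omega⟩
    · exact absurd ⟨w, he, by omega⟩ hR

lemma MatchedToward.abs_add_le (hM : IsPM (aztec n) (aztecSet n) M) {d : ℤ} {v : ℤ × ℤ}
    (h : MatchedToward M d v) : |v.1 + d| ≤ n := by
  obtain ⟨w, hw, hwd⟩ := h
  exact hwd ▸ (aztec_adj_iff.mp (hM.1 _ hw)).2.1.2.1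

lemma matchedToward_iff (hM : IsPM (aztec n) (aztecSet n) M) (d : ℤ) (v : ℤ × ℤ) :
    MatchedToward M d v ↔ s(v, (v.1 + d, v.2 + 1)) ∈ M ∨ s(v, (v.1 + d, v.2 - 1)) ∈ M := by
  constructor
  · rintro ⟨⟨x, y⟩, hw, rfl⟩
    have hy : |v.2 - y| = 1 := (aztec_adj_iff.mp (hM.1 _ hw)).2.2.2
    rcases (abs_eq zero_le_one).mp hy with h | h
    · exact .inr (by rwa [show y = v.2 - 1 by omega] at hw)
    · exact .inl (by rwa [show y = v.2 + 1 by omega] at hw)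
  · rintro (h | h) <;> exact ⟨_, h, rfl⟩

lemma not_mk_mem_and_mk_mem (hM : IsPM (aztec n) (aztecSet n) M) {v : ℤ × ℤ} {x y : ℤ} :
    ¬(s(v, (x, y + 1)) ∈ M ∧ s(v, (x, y - 1)) ∈ M) := by
  rintro ⟨h₁, h₂⟩
  have hv := (aztec_adj_iff.mp (hM.1 _ h₁)).1
  have := hM.eq_of_mk_mem_of_mk_mem hv h₁ h₂
  simp only [Prod.mk.injEq, true_and] at this
  omega

lemma cellEdgeCount_eq_sum (M : Finset (Sym2 (ℤ × ℤ))) (p q : ℤ) :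
    cellEdgeCount M p q =
      ((if nwEdge p q ∈ M then 1 else 0) + (if swEdge p q ∈ M then 1 else 0)) +
        ((if neEdge p q ∈ M then 1 else 0) + (if seEdge p q ∈ M then 1 else 0)) := by
  have hfilter : M.filter (fun e => e = nwEdge p q ∨ e = neEdge p q ∨ e = swEdge p q ∨
      e = seEdge p q) =
        ({nwEdge p q, swEdge p q, neEdge p q, seEdge p q} : Finset _).filter (· ∈ M) := by
    ext e
    simp only [mem_filter, mem_insert, mem_singleton]
    tauto
  rw [cellEdgeCount, hfilter, card_filter, sum_insert, sum_insert, sum_insert, sum_singleton,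
    add_assoc] <;>
  simp only [mem_insert, mem_singleton, nwEdge, neEdge, swEdge, seEdge, Sym2.eq_iff,
    Prod.mk.injEq] <;> omega

lemma cellEdgeCount_eq (hM : IsPM (aztec n) (aztecSet n) M) (p q : ℤ) :
    cellEdgeCount M p q =
      (if MatchedToward M 1 (p - 1, q) then 1 else 0) +
        (if MatchedToward M (-1) (p + 1, q) then 1 else 0) := by
  have hW : MatchedToward M 1 (p - 1, q) ↔ nwEdge p q ∈ M ∨ swEdge p q ∈ M := by
    rw [matchedToward_iff hM, nwEdge, swEdge, Sym2.eq_swap, sub_add_cancel]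
  have hE : MatchedToward M (-1) (p + 1, q) ↔ neEdge p q ∈ M ∨ seEdge p q ∈ M := by
    rw [matchedToward_iff hM, neEdge, seEdge, Sym2.eq_swap, ← sub_eq_add_neg,
      add_sub_cancel_right]
  have hW₁ : ¬(nwEdge p q ∈ M ∧ swEdge p q ∈ M) := by
    rw [nwEdge, swEdge, Sym2.eq_swap]
    exact not_mk_mem_and_mk_mem hM
  have hE₁ : ¬(neEdge p q ∈ M ∧ seEdge p q ∈ M) := by
    rw [neEdge, seEdge, Sym2.eq_swap]
    exact not_mk_mem_and_mk_mem hM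
  rw [cellEdgeCount_eq_sum, hW, hE]
  split_ifs <;> simp_all

end AztecMatching

def reflectAntidiag : Equiv.Perm (ℤ × ℤ) :=
  Function.Involutive.toPerm (fun v => (-v.2, -v.1)) fun v => by simp

@[simp]
lemma reflectAntidiag_apply (v : ℤ × ℤ) : reflectAntidiag v = (-v.2, -v.1) := rfl

lemma neg_swap_mem_aztecSet {n : ℕ} {v : ℤ × ℤ} :
    (-v.2, -v.1) ∈ aztecSet n ↔ v ∈ aztecSet n := by
  simp only [aztecSet, Set.mem_ofPred_eq, abs_neg, ← neg_add, odd_neg, add_comm v.2 v.1]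
  tauto

lemma image_reflectAntidiag_aztecSet (n : ℕ) : reflectAntidiag '' aztecSet n = aztecSet n := by
  ext v
  refine ⟨?_, fun hv => ⟨(-v.2, -v.1), neg_swap_mem_aztecSet.mpr hv, by simp⟩⟩
  rintro ⟨w, hw, rfl⟩
  exact neg_swap_mem_aztecSet.mpr hw

def aztecReflectAntidiag (n : ℕ) : aztec n ≃g aztec n where
  toEquiv := reflectAntidiag
  map_rel_iff' {u v} := by
    change _ ∧ _ ∧ _ ↔ _ ∧ _ ∧ _
    simp only [reflectAntidiag_apply, neg_swap_mem_aztecSet]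
    constructor <;> rintro ⟨hu, hv, h⟩ <;> exact ⟨hu, hv, by linear_combination h⟩

lemma cellEdgeCount_image_reflectAntidiag (M : Finset (Sym2 (ℤ × ℤ))) (p q : ℤ) :
    cellEdgeCount (M.image (Sym2.map reflectAntidiag)) p q = cellEdgeCount M (-q) (-p) := by
  have hinj := Sym2.map.injective reflectAntidiag.injective
  have hnw : nwEdge p q = (nwEdge (-q) (-p)).map reflectAntidiag := by
    simp only [nwEdge, Sym2.map_mk, reflectAntidiag_apply, Sym2.eq_iff, Prod.mk.injEq]; omega
  have hne : neEdge p q = (swEdge (-q) (-p)).map reflectAntidiag := by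
    simp only [neEdge, swEdge, Sym2.map_mk, reflectAntidiag_apply, Sym2.eq_iff, Prod.mk.injEq]
    omega
  have hsw : swEdge p q = (neEdge (-q) (-p)).map reflectAntidiag := by
    simp only [neEdge, swEdge, Sym2.map_mk, reflectAntidiag_apply, Sym2.eq_iff, Prod.mk.injEq]
    omega
  have hse : seEdge p q = (seEdge (-q) (-p)).map reflectAntidiag := by
    simp only [seEdge, Sym2.map_mk, reflectAntidiag_apply, Sym2.eq_iff, Prod.mk.injEq]; omega
  rw [cellEdgeCount, cellEdgeCount, Finset.filter_image, Finset.card_image_of_injective _ hinj]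
  congr 1
  refine Finset.filter_congr fun e _ => ?_
  simp only [hnw, hne, hsw, hse, hinj.eq_iff]
  tauto

lemma cellMatrix_image_reflectAntidiag (n : ℕ) (M : Finset (Sym2 (ℤ × ℤ))) :
    cellMatrix n (M.image (Sym2.map reflectAntidiag)) = (cellMatrix n M)ᵀ := by
  ext i j
  simp only [cellMatrix, cellEdgeCount_image_reflectAntidiag, Matrix.transpose_apply, cellCenter]
  congr 3 <;> ring

lemma IsPM.image_reflectAntidiag {n : ℕ} {M : Finset (Sym2 (ℤ × ℤ))}
    (hM : IsPM (aztec n) (aztecSet n) M) :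
    IsPM (aztec n) (aztecSet n) (M.image (Sym2.map reflectAntidiag)) :=
  image_reflectAntidiag_aztecSet n ▸ hM.image (aztecReflectAntidiag n).toEmbedding

lemma mk_mem_aztecSet_iff {n : ℕ} {x y : ℤ} :
    (x, y) ∈ aztecSet n ↔ (x + y) % 2 = 1 ∧ -(n : ℤ) ≤ x ∧ x ≤ n ∧ -(n : ℤ) ≤ y ∧ y ≤ n := by
  simp only [aztecSet, Set.mem_ofPred_eq, Int.odd_iff, abs_le]
  tauto

noncomputable def westProfile (n : ℕ) (M : Finset (Sym2 (ℤ × ℤ))) (i : Fin n) (m : ℕ) : ℤ :=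
  if MatchedToward M (-1) (2 * m - n, n - 1 - 2 * i) then 1 else 0

lemma cellMatrix_isRowPrimitive {n : ℕ} {M : Finset (Sym2 (ℤ × ℤ))}
    (hM : IsPM (aztec n) (aztecSet n) M) : IsRowPrimitive (cellMatrix n M) (westProfile n M) := by
  have hv (i : Fin n) {m : ℕ} (hm : m ≤ n) :
      (2 * (m : ℤ) - n, (n : ℤ) - 1 - 2 * i) ∈ aztecSet n := by
    rw [mk_mem_aztecSet_iff]
    omega
  refine ⟨fun i m => ?_, fun i => if_neg fun h => ?_, fun i => if_pos ?_, fun i j => ?_⟩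
  · unfold westProfile
    split_ifs <;> simp
  · have := abs_le.mp (h.abs_add_le hM)
    push_cast at this
    omega
  · refine (matchedToward_neg_one_iff hM (hv i le_rfl)).mpr fun h => ?_
    have := abs_le.mp (h.abs_add_le hM)
    omega
  · have hW := (matchedToward_neg_one_iff hM (hv i j.is_lt.le)).not_left.symm
    have e₁ : 2 * (j : ℤ) - n + 1 - 1 = 2 * (j : ℤ) - n := by ring
    have e₂ : 2 * (j : ℤ) - n + 1 + 1 = 2 * ((j + 1 : ℕ) : ℤ) - n := by push_cast; ring
    simp only [cellMatrix, cellCenter, cellEdgeCount_eq hM, westProfile, e₁, e₂, hW]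
    split_ifs <;> simp

/-- For every perfect matching `M` of the Aztec diamond graph `A_n`, every cell of
`A_n` contains `0`, `1`, or `2` edges of `M`, and the cell matrix of `M` is an
`n × n` alternating-sign matrix. -/
theorem cellMatrix_isASM (n : ℕ) (M : Finset (Sym2 (ℤ × ℤ)))
    (hM : IsPM (aztec n) (aztecSet n) M) :
    (∀ p q : ℤ, IsCellCenter n p q → cellEdgeCount M p q ∈ ({0, 1, 2} : Set ℕ)) ∧
      IsASM (cellMatrix n M) := by
  have hcols : IsRowPrimitive (cellMatrix n M)ᵀ
      (westProfile n (M.image (Sym2.map reflectAntidiag))) :=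
    cellMatrix_image_reflectAntidiag n M ▸ cellMatrix_isRowPrimitive hM.image_reflectAntidiag
  refine ⟨fun p q _ => ?_, (cellMatrix_isRowPrimitive hM).isASM hcols⟩
  rw [cellEdgeCount_eq hM]
  split_ifs <;> simp
end

section
/- 2-enumeration of alternating-sign matrices: for every n ≥ 1, the sum over all n×n alternating-sign matrices A of 2^{N₊(A)}, where N₊(A) denotes the number of entries of A equal to +1, equals 2^{n(n+1)/2}. -/
open Finset Matrix Polynomial
open scoped Nat

namespace Polynomial

lemma natDegree_bernoulli_le (n : ℕ) : (bernoulli n).natDegree ≤ n :=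
  natDegree_le_iff_coeff_eq_zero.mpr fun i hi => by
    rw [coeff_bernoulli, if_neg (not_le.mpr hi)]

lemma coeff_bernoulli_self (n : ℕ) : (bernoulli n).coeff n = 1 := by
  simp [coeff_bernoulli]

end Polynomial

def trapezoidWeight {α : Type*} [DecidableEq α] (u v x : α) : ℚ := if x = u ∨ x = v then 1 else 2

noncomputable def trapezoidPoly (p : ℕ) : ℚ[X] :=
  Polynomial.bernoulli (p + 1) + C ((p + 1 : ℚ) / 2) * X ^ p

lemma natDegree_trapezoidPoly_le (p : ℕ) : (trapezoidPoly p).natDegree ≤ p + 1 :=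
  natDegree_add_le_of_degree_le (natDegree_bernoulli_le _)
    ((natDegree_C_mul_X_pow_le _ _).trans p.le_succ)

lemma coeff_trapezoidPoly_self (p : ℕ) : (trapezoidPoly p).coeff (p + 1) = 1 := by
  simp [trapezoidPoly, coeff_bernoulli_self, coeff_X_pow]

lemma monic_trapezoidPoly (p : ℕ) : (trapezoidPoly p).Monic :=
  monic_of_natDegree_le_of_coeff_eq_one _ (natDegree_trapezoidPoly_le p)
    (coeff_trapezoidPoly_self p)

lemma natDegree_trapezoidPoly (p : ℕ) : (trapezoidPoly p).natDegree = p + 1 :=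
  natDegree_eq_of_le_of_coeff_ne_zero (natDegree_trapezoidPoly_le p)
    (by rw [coeff_trapezoidPoly_self]; exact one_ne_zero)

lemma eval_trapezoidPoly (p t : ℕ) :
    (trapezoidPoly p).eval (t : ℚ) =
      _root_.bernoulli (p + 1) + (p + 1) * (∑ x ∈ range t, (x : ℚ) ^ p + (t : ℚ) ^ p / 2) := by
  simp only [trapezoidPoly, eval_add, Polynomial.bernoulli_succ_eval, eval_mul, eval_C, eval_pow,
    eval_X]
  ring

theorem sum_Icc_trapezoidWeight_mul_pow {u v : ℕ} (huv : u < v) (p : ℕ) :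
    ∑ x ∈ Icc u v, trapezoidWeight u v x * (x : ℚ) ^ p =
      2 / (p + 1) * ((trapezoidPoly p).eval (v : ℚ) - (trapezoidPoly p).eval (u : ℚ)) := by
  have hinterior : ∀ x ∈ Ioo u v, trapezoidWeight u v x * (x : ℚ) ^ p = 2 * (x : ℚ) ^ p :=
    fun x hx => by
      rw [mem_Ioo] at hx
      rw [trapezoidWeight, if_neg (by omega)]
  rw [eval_trapezoidPoly, eval_trapezoidPoly, ← sum_range_add_sum_Ico _ huv.le,
    ← Ico_insert_right huv.le, sum_insert right_notMem_Ico, ← Ioo_insert_left huv,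
    sum_insert left_notMem_Ioo, sum_insert left_notMem_Ioo, sum_congr rfl hinterior,
    ← mul_sum]
  simp only [trapezoidWeight, true_or, or_true, if_true]
  field_simp
  ring

theorem sum_Icc_trapezoidWeight_mul_pow_val {n : ℕ} {u v : Fin n} (huv : u < v) (p : ℕ) :
    ∑ x ∈ Icc u v, trapezoidWeight u v x * ((x : ℕ) : ℚ) ^ p =
      2 / (p + 1) *
        ((trapezoidPoly p).eval ((v : ℕ) : ℚ) - (trapezoidPoly p).eval ((u : ℕ) : ℚ)) := by
  rw [← sum_Icc_trapezoidWeight_mul_pow huv, ← Fin.map_valEmbedding_Icc, sum_map]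
  simp [trapezoidWeight, Fin.val_inj]

lemma det_eq_det_succ_sub_castSucc {R : Type*} [CommRing R] {k : ℕ}
    (H : Matrix (Fin (k + 1)) (Fin (k + 1)) R) (h0 : ∀ i, H i 0 = 1) :
    H.det = (of fun i j : Fin k => H i.succ j.succ - H i.castSucc j.succ).det := by
  let B : Matrix (Fin (k + 1)) (Fin (k + 1)) R :=
    of fun i j => Fin.cases (H 0 j) (fun i => H i.succ j - H i.castSucc j) i
  rw [det_eq_of_forall_row_eq_smul_add_pred (A := H) (B := B) (fun _ => 1) (fun _ => rfl)
    (fun i j => by simp [B]), det_succ_column_zero, Fin.sum_univ_succ]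
  simp [B, h0, Fin.succAbove_zero]
  rfl

lemma prod_two_div_succ (k : ℕ) : ∏ j : Fin k, (2 / ((j : ℕ) + 1) : ℚ) = 2 ^ k / k ! := by
  rw [prod_div_distrib, prod_const, card_univ, Fintype.card_fin,
    Fin.prod_univ_eq_prod_range (fun j => (j : ℚ) + 1), ← prod_range_add_one_eq_factorial]
  push_cast
  rfl

theorem sum_prod_trapezoidWeight_mul_det_vandermonde {n k : ℕ} (b : Fin (k + 1) → Fin n)
    (hb : StrictMono b) :
    ∑ a ∈ Fintype.piFinset fun j : Fin k => Icc (b j.castSucc) (b j.succ),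
        (∏ j, trapezoidWeight (b j.castSucc) (b j.succ) (a j)) *
          (vandermonde fun j => ((a j : ℕ) : ℚ)).det =
      2 ^ k / k ! * (vandermonde fun i => ((b i : ℕ) : ℚ)).det := by
  let P : Fin (k + 1) → ℚ[X] := Fin.cons 1 fun j => trapezoidPoly j
  let row (i : Fin k) (x : Fin n) : Fin k → ℚ := fun j =>
    trapezoidWeight (b i.castSucc) (b i.succ) x * ((x : ℕ) : ℚ) ^ (j : ℕ)
  calc _ = ∑ a ∈ Fintype.piFinset fun j : Fin k => Icc (b j.castSucc) (b j.succ),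
        detRowAlternating fun i => row i (a i) := by
        refine sum_congr rfl fun a _ => ?_
        rw [← det_mul_column]
        rfl
    _ = detRowAlternating fun i => ∑ x ∈ Icc (b i.castSucc) (b i.succ), row i x :=
        (detRowAlternating.map_sum_finset _ _).symm
    _ = (of fun i j : Fin k => 2 / ((j : ℕ) + 1) *
          ((P j.succ).eval ((b i.succ : ℕ) : ℚ) -
            (P j.succ).eval ((b i.castSucc : ℕ) : ℚ))).det := by
        congr 1
        ext i j
        simp [row, Finset.sum_apply, P,
          sum_Icc_trapezoidWeight_mul_pow_val (hb (Fin.castSucc_lt_succ (i := i)))]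
    _ = (∏ j : Fin k, (2 / ((j : ℕ) + 1) : ℚ)) * (of fun i j : Fin k =>
          (P j.succ).eval ((b i.succ : ℕ) : ℚ) - (P j.succ).eval ((b i.castSucc : ℕ) : ℚ)).det :=
        det_mul_row _ _
    _ = 2 ^ k / k ! * (of fun i j : Fin (k + 1) => (P j).eval ((b i : ℕ) : ℚ)).det := by
        rw [prod_two_div_succ, det_eq_det_succ_sub_castSucc _ fun i => by simp [P]]
        rfl
    _ = _ := by
        rw [← det_eval_matrixOfPolynomials_eq_det_vandermonde]
        · intro i
          cases i using Fin.cases <;> simp [P, natDegree_trapezoidPoly]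
        · intro i
          cases i using Fin.cases <;> simp [P, monic_trapezoidPoly]

theorem Matrix.pow_apply_eq_sum_prod {ι R : Type*} [Fintype ι] [DecidableEq ι] [CommSemiring R]
    (M : Matrix ι ι R) (k : ℕ) (a b : ι) :
    (M ^ k) a b = ∑ c : Fin (k + 1) → ι with c 0 = a ∧ c (Fin.last k) = b,
      ∏ i : Fin k, M (c i.castSucc) (c i.succ) := by
  induction k generalizing a with
  | zero =>
    rw [pow_zero, one_apply, sum_filter, ← (Equiv.funUnique (Fin 1) ι).symm.sum_comp]
    simp [ite_and]
  | succ k ih =>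
    rw [pow_succ', mul_apply, sum_filter, ← (Fin.consEquiv fun _ => ι).sum_comp,
      Fintype.sum_prod_type]
    simp_rw [ih, mul_sum, sum_filter]
    rw [sum_comm]
    simp [Fin.prod_univ_succ, ← Fin.succ_last, ite_and]

section Interlacing

variable {α : Type*} [LinearOrder α]

/-- In terms of the increasing enumerations of `T` and `S`, this says `sⱼ ≤ tⱼ ≤ sⱼ₊₁`
(`interlaces_iff`); the prefix-count form is the one read off from the rows of an ASM. -/
def Interlaces (T S : Finset α) : Prop :=
  #T + 1 = #S ∧ ∀ m, #{x ∈ T | x ≤ m} ≤ #{x ∈ S | x ≤ m} ∧ #{x ∈ S | x ≤ m} ≤ #{x ∈ T | x ≤ m} + 1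

lemma orderEmbOfFin_le_iff_lt_card {s : Finset α} {k : ℕ} (h : #s = k) (j : Fin k) (m : α) :
    s.orderEmbOfFin h j ≤ m ↔ (j : ℕ) < #{x ∈ s | x ≤ m} := by
  set e := s.orderEmbOfFin h
  have hcard : #{x ∈ s | x ≤ m} = #{j' | e j' ≤ m} := by
    conv_lhs => rw [← image_orderEmbOfFin_univ s h, filter_image]
    exact card_image_of_injective _ e.injective
  rw [hcard]
  constructor
  · intro hj
    calc (j : ℕ) < #(Iic j) := by simp
      _ ≤ _ := card_le_card fun j' hj' => by
        simp only [mem_filter, mem_univ, true_and]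
        exact (e.monotone (mem_Iic.mp hj')).trans hj
  · intro hj
    by_contra! hlt
    have : #{j' | e j' ≤ m} ≤ #(Iio j) := card_le_card fun j' hj' => by
      simp only [mem_filter, mem_univ, true_and] at hj'
      exact mem_Iio.mpr (e.lt_iff_lt.mp (hj'.trans_lt hlt))
    simp at this
    omega

theorem interlaces_iff {T S : Finset α} {k : ℕ} (hT : #T = k) (hS : #S = k + 1) :
    Interlaces T S ↔ ∀ j : Fin k,
      S.orderEmbOfFin hS j.castSucc ≤ T.orderEmbOfFin hT j ∧
        T.orderEmbOfFin hT j ≤ S.orderEmbOfFin hS j.succ := by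
  constructor
  · rintro ⟨-, hcount⟩ j
    have hT' := (orderEmbOfFin_le_iff_lt_card hT j _).mp le_rfl
    have hS' := (orderEmbOfFin_le_iff_lt_card hS j.succ _).mp le_rfl
    rw [orderEmbOfFin_le_iff_lt_card, orderEmbOfFin_le_iff_lt_card]
    have := hcount (T.orderEmbOfFin hT j)
    have := hcount (S.orderEmbOfFin hS j.succ)
    simp only [Fin.val_succ, Fin.val_castSucc] at *
    omega
  · intro hbounds
    refine ⟨by omega, fun m => ⟨?_, ?_⟩⟩
    · by_contra! hlt
      have hle : #{x ∈ T | x ≤ m} ≤ k := hT ▸ card_filter_le _ _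
      have := (orderEmbOfFin_le_iff_lt_card hT ⟨_, hlt.trans_le hle⟩ m).mpr hlt
      have := (orderEmbOfFin_le_iff_lt_card hS _ m).mp ((hbounds _).1.trans this)
      simp at this
    · by_contra! hlt
      have hle : #{x ∈ S | x ≤ m} ≤ k + 1 := hS ▸ card_filter_le _ _
      have := (orderEmbOfFin_le_iff_lt_card hS (Fin.succ ⟨#{x ∈ T | x ≤ m}, by omega⟩) m).mpr
        (by simpa using hlt)
      have := (orderEmbOfFin_le_iff_lt_card hT _ m).mp ((hbounds _).2.trans this)
      simp at this

lemma mem_iff_eq_or_eq_of_orderEmbOfFin_le {S : Finset α} {k : ℕ} (hS : #S = k + 1)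
    {j : Fin k} {x : α}
    (hx : S.orderEmbOfFin hS j.castSucc ≤ x ∧ x ≤ S.orderEmbOfFin hS j.succ) :
    x ∈ S ↔ x = S.orderEmbOfFin hS j.castSucc ∨ x = S.orderEmbOfFin hS j.succ := by
  refine ⟨fun hxS => ?_, by rintro (rfl | rfl) <;> exact orderEmbOfFin_mem _ _ _⟩
  obtain ⟨i, rfl⟩ : x ∈ Set.range (S.orderEmbOfFin hS) := by rwa [range_orderEmbOfFin]
  simp only [OrderEmbedding.le_iff_le, (S.orderEmbOfFin hS).injective.eq_iff, Fin.le_def,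
    Fin.ext_iff, Fin.val_succ, Fin.val_castSucc] at hx ⊢
  omega

lemma monotone_of_orderEmbOfFin_le {S : Finset α} {k : ℕ} (hS : #S = k + 1) {a : Fin k → α}
    (hbounds : ∀ j, S.orderEmbOfFin hS j.castSucc ≤ a j ∧ a j ≤ S.orderEmbOfFin hS j.succ) :
    Monotone a := by
  intro x y hxy
  rcases hxy.eq_or_lt with rfl | hlt
  · rfl
  · calc a x ≤ S.orderEmbOfFin hS x.succ := (hbounds x).2
      _ ≤ S.orderEmbOfFin hS y.castSucc := by simpa [Fin.succ_le_castSucc_iff] using hlt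
      _ ≤ a y := (hbounds y).1

lemma orderEmbOfFin_image_univ {k : ℕ} {a : Fin k → α} (ha : StrictMono a)
    (h : #(univ.image a) = k) : ⇑((univ.image a).orderEmbOfFin h) = a :=
  (orderEmbOfFin_unique h (fun j => mem_image_of_mem a (mem_univ j)) ha).symm

end Interlacing

section TransferMatrix

variable {n : ℕ}

def vandermondeProd (T : Finset (Fin n)) : ℚ :=
  ∏ x ∈ T, ∏ y ∈ T with x < y, ((y : ℕ) - (x : ℕ) : ℚ)

lemma vandermondeProd_image {k : ℕ} {a : Fin k → Fin n} (ha : StrictMono a) :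
    vandermondeProd (univ.image a) = (vandermonde fun j => ((a j : ℕ) : ℚ)).det := by
  rw [det_vandermonde, vandermondeProd, prod_image ha.injective.injOn]
  refine prod_congr rfl fun i _ => ?_
  rw [filter_image, prod_image ha.injective.injOn]
  congr 1
  ext j
  simp [ha.lt_iff_lt]

lemma vandermondeProd_univ (n : ℕ) :
    vandermondeProd (univ : Finset (Fin n)) = ∏ i ∈ range n, (i ! : ℚ) := by
  rw [← image_id (s := univ), vandermondeProd_image strictMono_id]
  cases n with
  | zero => simp
  | succ n =>
    have h := det_vandermonde_id_eq_superFactorial (R := ℚ) n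
    rw [← Nat.prod_range_succ_factorial, Nat.cast_prod] at h
    exact h

open scoped Classical in
noncomputable def transferMatrix (n : ℕ) : Matrix (Finset (Fin n)) (Finset (Fin n)) ℚ :=
  of fun T S => if Interlaces T S then 2 ^ #(S \ T) else 0

lemma transferMatrix_eq_zero {T S : Finset (Fin n)} (h : #T + 1 ≠ #S) :
    transferMatrix n T S = 0 := by
  simp [transferMatrix, Interlaces, h]

lemma two_pow_card_sdiff_image {S : Finset (Fin n)} {k : ℕ} (hS : #S = k + 1)
    {a : Fin k → Fin n} (ha : StrictMono a)
    (hbounds : ∀ j, S.orderEmbOfFin hS j.castSucc ≤ a j ∧ a j ≤ S.orderEmbOfFin hS j.succ) :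
    (2 : ℚ) ^ #(S \ univ.image a) =
      2 * ∏ j, trapezoidWeight (S.orderEmbOfFin hS j.castSucc) (S.orderEmbOfFin hS j.succ)
        (a j) := by
  set T := univ.image a
  have hT : #T = k := by simp [T, card_image_of_injective _ ha.injective]
  have hcard : #(S \ T) = #(T \ S) + 1 := by
    have h1 := card_sdiff_add_card S T
    have h2 := card_sdiff_add_card T S
    rw [union_comm] at h2
    omega
  have hweight : ∀ j, trapezoidWeight (S.orderEmbOfFin hS j.castSucc) (S.orderEmbOfFin hS j.succ)
      (a j) = if a j ∈ S then 1 else 2 := fun j => by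
    rw [trapezoidWeight]
    exact if_congr (mem_iff_eq_or_eq_of_orderEmbOfFin_le hS (hbounds j)).symm rfl rfl
  simp_rw [hweight]
  rw [← prod_image (f := fun x => if x ∈ S then (1 : ℚ) else 2) ha.injective.injOn, prod_ite,
    prod_const_one, one_mul, prod_const, filter_notMem_eq_sdiff, hcard, pow_succ, mul_comm]

lemma vandermondeProd_mul_transferMatrix_image {S : Finset (Fin n)} {k : ℕ} (hS : #S = k + 1)
    {a : Fin k → Fin n} (ha : StrictMono a)
    (hbounds : ∀ j, S.orderEmbOfFin hS j.castSucc ≤ a j ∧ a j ≤ S.orderEmbOfFin hS j.succ) :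
    vandermondeProd (univ.image a) * transferMatrix n (univ.image a) S =
      2 * ((∏ j, trapezoidWeight (S.orderEmbOfFin hS j.castSucc) (S.orderEmbOfFin hS j.succ)
        (a j)) * (vandermonde fun j => ((a j : ℕ) : ℚ)).det) := by
  have hcard : #(univ.image a) = k := by simp [card_image_of_injective _ ha.injective]
  have hI : Interlaces (univ.image a) S := by
    rw [interlaces_iff hcard hS, orderEmbOfFin_image_univ ha]
    exact hbounds
  rw [vandermondeProd_image ha, transferMatrix, of_apply, if_pos hI,
    two_pow_card_sdiff_image hS ha hbounds]
  ring

/-- Enumerating each interlacing `T` increasingly turns the sum into one over the box of tuples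
`sⱼ ≤ tⱼ ≤ sⱼ₊₁`; the tuples that are not strictly increasing have vanishing Vandermonde
determinant. -/
lemma sum_vandermondeProd_mul_transferMatrix_eq_sum_piFinset {S : Finset (Fin n)} {k : ℕ}
    (hS : #S = k + 1) :
    ∑ T, vandermondeProd T * transferMatrix n T S =
      ∑ a ∈ Fintype.piFinset fun j : Fin k =>
          Icc (S.orderEmbOfFin hS j.castSucc) (S.orderEmbOfFin hS j.succ),
        2 * ((∏ j, trapezoidWeight (S.orderEmbOfFin hS j.castSucc) (S.orderEmbOfFin hS j.succ)
          (a j)) * (vandermonde fun j => ((a j : ℕ) : ℚ)).det) := by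
  set b := S.orderEmbOfFin hS
  have hbox : ∀ a, a ∈ Fintype.piFinset (fun j : Fin k => Icc (b j.castSucc) (b j.succ)) ↔
      ∀ j, b j.castSucc ≤ a j ∧ a j ≤ b j.succ := by
    simp [Fintype.mem_piFinset]
  have hstrict : ∀ a, (∀ j, b j.castSucc ≤ a j ∧ a j ≤ b j.succ) →
      2 * ((∏ j, trapezoidWeight (b j.castSucc) (b j.succ) (a j)) *
        (vandermonde fun j => ((a j : ℕ) : ℚ)).det) ≠ 0 → StrictMono a :=
    fun a hbounds hfa => (monotone_of_orderEmbOfFin_le hS hbounds).strictMono_of_injective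
      fun x y hxy => det_vandermonde_ne_zero_iff.mp
        (right_ne_zero_of_mul (right_ne_zero_of_mul hfa)) (by simp [hxy])
  refine (sum_bij_ne_zero (fun a _ _ => univ.image a) (fun _ _ _ => mem_univ _) ?_ ?_ ?_).symm
  · intro a₁ h₁ hf₁ a₂ h₂ hf₂ himage
    have hrange : Set.range a₁ = Set.range a₂ := by
      simpa [← Set.image_univ] using congrArg ((↑) : Finset (Fin n) → Set (Fin n)) himage
    exact ((hstrict a₁ ((hbox a₁).mp h₁) hf₁).range_inj
      (hstrict a₂ ((hbox a₂).mp h₂) hf₂)).mp hrange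
  · intro T _ hT
    have hI : Interlaces T S := by
      by_contra hI
      simp [transferMatrix, hI] at hT
    have hTk : #T = k := by have := hI.1; omega
    have hbounds := (interlaces_iff hTk hS).mp hI
    have himage : univ.image (T.orderEmbOfFin hTk) = T := image_orderEmbOfFin_univ T hTk
    have hvalue := vandermondeProd_mul_transferMatrix_image hS
      (T.orderEmbOfFin hTk).strictMono hbounds
    rw [himage] at hvalue
    exact ⟨T.orderEmbOfFin hTk, (hbox _).mpr hbounds, hvalue ▸ hT, himage⟩
  · intro a h hf
    exact (vandermondeProd_mul_transferMatrix_image hS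
      (hstrict a ((hbox a).mp h) hf) ((hbox a).mp h)).symm

theorem sum_vandermondeProd_mul_transferMatrix {S : Finset (Fin n)} {k : ℕ} (hS : #S = k + 1) :
    ∑ T, vandermondeProd T * transferMatrix n T S = 2 ^ (k + 1) / k ! * vandermondeProd S := by
  rw [sum_vandermondeProd_mul_transferMatrix_eq_sum_piFinset hS, ← mul_sum,
    sum_prod_trapezoidWeight_mul_det_vandermonde _ (S.orderEmbOfFin hS).strictMono,
    ← vandermondeProd_image (S.orderEmbOfFin hS).strictMono, image_orderEmbOfFin_univ]
  ring

theorem transferMatrix_pow_empty_apply (k : ℕ) (S : Finset (Fin n)) :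
    (transferMatrix n ^ k) ∅ S =
      if #S = k then 2 ^ (k * (k + 1) / 2) * vandermondeProd S / ∏ i ∈ range k, (i ! : ℚ)
      else 0 := by
  induction k generalizing S with
  | zero =>
    rcases eq_or_ne S ∅ with rfl | hS <;>
      simp [one_apply, vandermondeProd, *, eq_comm (a := ∅)]
  | succ k ih =>
    rw [pow_succ, mul_apply]
    simp_rw [ih]
    split_ifs with hS
    · have hterm : ∀ T : Finset (Fin n),
          (if #T = k then 2 ^ (k * (k + 1) / 2) * vandermondeProd T / ∏ i ∈ range k, (i ! : ℚ)
            else 0) * transferMatrix n T S =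
          2 ^ (k * (k + 1) / 2) / (∏ i ∈ range k, (i ! : ℚ)) *
            (vandermondeProd T * transferMatrix n T S) := fun T => by
        split_ifs with hT
        · ring
        · rw [transferMatrix_eq_zero (by omega)]
          ring
      have htriangle : (k + 1) * (k + 1 + 1) / 2 = k * (k + 1) / 2 + (k + 1) := by
        rw [show (k + 1) * (k + 1 + 1) = k * (k + 1) + 2 * (k + 1) by ring,
          Nat.add_mul_div_left _ _ two_pos]
      have : ∏ i ∈ range k, (i ! : ℚ) ≠ 0 := prod_ne_zero_iff.mpr fun i _ => by positivity
      rw [sum_congr rfl fun T _ => hterm T, ← mul_sum, sum_vandermondeProd_mul_transferMatrix hS,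
        prod_range_succ, htriangle, pow_add]
      field_simp
      ring
    · refine sum_eq_zero fun T _ => ?_
      split_ifs with hT
      · rw [transferMatrix_eq_zero (by omega), mul_zero]
      · rw [zero_mul]

end TransferMatrix

section MonotoneTriangle

variable {n : ℕ}

lemma sum_Iic_boole_mem (T : Finset (Fin n)) (m : Fin n) :
    ∑ j ∈ Iic m, (if j ∈ T then 1 else 0 : ℤ) = #{x ∈ T | x ≤ m} := by
  rw [sum_boole]
  congr 2
  ext x
  simp [and_comm]

lemma sum_boole_mem (T : Finset (Fin n)) : ∑ j, (if j ∈ T then 1 else 0 : ℤ) = #T := by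
  simp

def colPartialSum (A : Matrix (Fin n) (Fin n) ℤ) (i : Fin (n + 1)) (j : Fin n) : ℤ :=
  ∑ i' with i'.castSucc < i, A i' j

section colPartialSum

variable (A : Matrix (Fin n) (Fin n) ℤ) (j : Fin n)

lemma colPartialSum_zero : colPartialSum A 0 j = 0 := by
  simp [colPartialSum]

lemma colPartialSum_succ_eq_sum_Iic (i : Fin n) :
    colPartialSum A i.succ j = ∑ i' ∈ Iic i, A i' j := by
  simp only [colPartialSum, Fin.castSucc_lt_succ_iff]
  congr 1
  ext
  simp

lemma colPartialSum_castSucc (i : Fin n) :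
    colPartialSum A i.castSucc j = ∑ i' ∈ Iio i, A i' j := by
  simp only [colPartialSum, Fin.castSucc_lt_castSucc_iff]
  congr 1
  ext
  simp

lemma colPartialSum_succ (i : Fin n) :
    colPartialSum A i.succ j = colPartialSum A i.castSucc j + A i j := by
  rw [colPartialSum_succ_eq_sum_Iic, colPartialSum_castSucc, ← Iio_insert,
    sum_insert notMem_Iio_self, add_comm]

lemma colPartialSum_last : colPartialSum A (Fin.last n) j = ∑ i, A i j := by
  simp [colPartialSum, Fin.castSucc_lt_last]

end colPartialSum

def monotoneTriangle (A : Matrix (Fin n) (Fin n) ℤ) (i : Fin (n + 1)) : Finset (Fin n) :=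
  {j | colPartialSum A i j = 1}

def ofMonotoneTriangle (c : Fin (n + 1) → Finset (Fin n)) : Matrix (Fin n) (Fin n) ℤ :=
  of fun i j => (if j ∈ c i.succ then 1 else 0) - (if j ∈ c i.castSucc then 1 else 0)

lemma monotoneTriangle_zero (A : Matrix (Fin n) (Fin n) ℤ) : monotoneTriangle A 0 = ∅ := by
  simp [monotoneTriangle, colPartialSum_zero]

section IsASM

variable {A : Matrix (Fin n) (Fin n) ℤ} (hA : IsASM A)
include hA

lemma colPartialSum_eq_zero_or_eq_one (i : Fin (n + 1)) (j : Fin n) :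
    colPartialSum A i j = 0 ∨ colPartialSum A i j = 1 := by
  cases i using Fin.cases with
  | zero => exact .inl (colPartialSum_zero A j)
  | succ i => simpa [colPartialSum_succ_eq_sum_Iic] using hA.2.2.2.1 j i

lemma ite_mem_monotoneTriangle (i : Fin (n + 1)) (j : Fin n) :
    (if j ∈ monotoneTriangle A i then 1 else 0) = colPartialSum A i j := by
  rcases colPartialSum_eq_zero_or_eq_one hA i j with h | h <;> simp [monotoneTriangle, h]

lemma monotoneTriangle_last : monotoneTriangle A (Fin.last n) = univ := by
  ext j
  simp [monotoneTriangle, colPartialSum_last, hA.2.2.2.2 j]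

lemma interlaces_monotoneTriangle (i : Fin n) :
    Interlaces (monotoneTriangle A i.castSucc) (monotoneTriangle A i.succ) := by
  have hsum : ∀ s : Finset (Fin n),
      ∑ j ∈ s, (if j ∈ monotoneTriangle A i.succ then 1 else 0 : ℤ) =
        ∑ j ∈ s, (if j ∈ monotoneTriangle A i.castSucc then 1 else 0 : ℤ) + ∑ j ∈ s, A i j := by
    intro s
    simp_rw [ite_mem_monotoneTriangle hA, colPartialSum_succ, sum_add_distrib]
  refine ⟨?_, fun m => ?_⟩
  · have := hsum univ
    rw [sum_boole_mem, sum_boole_mem, hA.2.2.1 i] at this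
    omega
  · have := hsum (Iic m)
    rw [sum_Iic_boole_mem, sum_Iic_boole_mem] at this
    have hrow := hA.2.1 i m
    simp only [Set.mem_insert_iff, Set.mem_singleton_iff] at hrow
    omega

lemma monotoneTriangle_succ_sdiff (i : Fin n) :
    monotoneTriangle A i.succ \ monotoneTriangle A i.castSucc =
      ({j | A i j = 1} : Finset (Fin n)) := by
  ext j
  have h := colPartialSum_succ A j i
  rcases colPartialSum_eq_zero_or_eq_one hA i.succ j with h₁ | h₁ <;>
    rcases colPartialSum_eq_zero_or_eq_one hA i.castSucc j with h₂ | h₂ <;>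
    simp [monotoneTriangle, h₁, h₂] <;> omega

lemma ofMonotoneTriangle_monotoneTriangle : ofMonotoneTriangle (monotoneTriangle A) = A := by
  ext i j
  simp only [ofMonotoneTriangle, of_apply, ite_mem_monotoneTriangle hA, colPartialSum_succ]
  ring

lemma two_pow_card_eq_prod_transferMatrix :
    (2 : ℚ) ^ #{ij : Fin n × Fin n | A ij.1 ij.2 = 1} =
      ∏ i : Fin n,
        transferMatrix n (monotoneTriangle A i.castSucc) (monotoneTriangle A i.succ) := by
  have hcard : #{ij : Fin n × Fin n | A ij.1 ij.2 = 1} = ∑ i, #{j | A i j = 1} := by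
    simp only [card_filter, Fintype.sum_prod_type]
  rw [hcard, ← prod_pow_eq_pow_sum]
  refine prod_congr rfl fun i _ => ?_
  rw [transferMatrix, of_apply, if_pos (interlaces_monotoneTriangle hA i),
    monotoneTriangle_succ_sdiff hA]

end IsASM

section ofMonotoneTriangle

variable {c : Fin (n + 1) → Finset (Fin n)} (h0 : c 0 = ∅)
include h0

lemma colPartialSum_ofMonotoneTriangle (i : Fin (n + 1)) (j : Fin n) :
    colPartialSum (ofMonotoneTriangle c) i j = if j ∈ c i then 1 else 0 := by
  induction i using Fin.induction with
  | zero => simp [colPartialSum_zero, h0]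
  | succ i ih =>
    rw [colPartialSum_succ, ih]
    simp [ofMonotoneTriangle]

lemma monotoneTriangle_ofMonotoneTriangle : monotoneTriangle (ofMonotoneTriangle c) = c := by
  ext i j
  simp [monotoneTriangle, colPartialSum_ofMonotoneTriangle h0]

lemma isASM_ofMonotoneTriangle (hlast : c (Fin.last n) = univ)
    (hI : ∀ i : Fin n, Interlaces (c i.castSucc) (c i.succ)) : IsASM (ofMonotoneTriangle c) := by
  have hrow : ∀ i (s : Finset (Fin n)), ∑ j ∈ s, ofMonotoneTriangle c i j =
      ∑ j ∈ s, (if j ∈ c i.succ then 1 else 0 : ℤ) -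
        ∑ j ∈ s, (if j ∈ c i.castSucc then 1 else 0) :=
    fun i s => sum_sub_distrib _ _
  refine ⟨fun i j => ?_, fun i m => ?_, fun i => ?_, fun j m => ?_, fun j => ?_⟩
  · by_cases h₁ : j ∈ c i.succ <;> by_cases h₂ : j ∈ c i.castSucc <;>
      simp [ofMonotoneTriangle, h₁, h₂]
  · rw [hrow, sum_Iic_boole_mem, sum_Iic_boole_mem]
    have := (hI i).2 m
    simp only [Set.mem_insert_iff, Set.mem_singleton_iff]
    omega
  · rw [hrow, sum_boole_mem, sum_boole_mem]
    have := (hI i).1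
    omega
  · rw [← colPartialSum_succ_eq_sum_Iic, colPartialSum_ofMonotoneTriangle h0]
    split_ifs <;> simp
  · rw [← colPartialSum_last, colPartialSum_ofMonotoneTriangle h0, hlast, if_pos (mem_univ j)]

end ofMonotoneTriangle

lemma finite_setOf_isASM (n : ℕ) : {A : Matrix (Fin n) (Fin n) ℤ | IsASM A}.Finite :=
  (Set.Finite.pi fun _ => Set.Finite.pi fun _ => Set.toFinite {-1, 0, 1}).subset
    fun A hA => by simpa [Set.mem_pi] using hA.1

theorem sum_two_pow_card_eq_transferMatrix_pow
    (hfin : {A : Matrix (Fin n) (Fin n) ℤ | IsASM A}.Finite) :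
    ∑ A ∈ hfin.toFinset, (2 : ℚ) ^ #{ij : Fin n × Fin n | A ij.1 ij.2 = 1} =
      (transferMatrix n ^ n) ∅ univ := by
  rw [pow_apply_eq_sum_prod]
  refine sum_bij_ne_zero (fun A _ _ => monotoneTriangle A) (fun A hA _ => ?_) ?_ ?_ ?_
  · rw [Set.Finite.mem_toFinset] at hA
    simp [monotoneTriangle_zero, monotoneTriangle_last hA]
  · intro A₁ h₁ _ A₂ h₂ _ h
    rw [Set.Finite.mem_toFinset] at h₁ h₂
    rw [← ofMonotoneTriangle_monotoneTriangle h₁, h, ofMonotoneTriangle_monotoneTriangle h₂]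
  · intro c hc hprod
    simp only [mem_filter, mem_univ, true_and] at hc
    have hI : ∀ i : Fin n, Interlaces (c i.castSucc) (c i.succ) := fun i => by
      by_contra hI
      exact hprod (prod_eq_zero (mem_univ i) (by simp [transferMatrix, hI]))
    exact ⟨ofMonotoneTriangle c, by simpa using isASM_ofMonotoneTriangle hc.1 hc.2 hI,
      by positivity, monotoneTriangle_ofMonotoneTriangle hc.1⟩
  · intro A hA _
    rw [Set.Finite.mem_toFinset] at hA
    exact two_pow_card_eq_prod_transferMatrix hA

end MonotoneTriangle

open scoped Classical in
theorem asm_two_enumeration_general (n : ℕ) :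
    (∑ᶠ A ∈ {A : Matrix (Fin n) (Fin n) ℤ | IsASM A},
        (2 : ℕ) ^ (Finset.univ.filter fun ij : Fin n × Fin n => A ij.1 ij.2 = 1).card)
      = 2 ^ (n * (n + 1) / 2) := by
  have hfin := finite_setOf_isASM n
  have key := sum_two_pow_card_eq_transferMatrix_pow hfin
  rw [transferMatrix_pow_empty_apply, if_pos (card_fin n), vandermondeProd_univ,
    mul_div_assoc, div_self (prod_ne_zero_iff.mpr fun i _ => by positivity), mul_one] at key
  rw [finsum_mem_eq_finite_toFinset_sum _ hfin]
  exact_mod_cast key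

open scoped Classical in
/-- **2-enumeration of alternating-sign matrices**: the sum, over all `n × n`
alternating-sign matrices `A`, of `2 ^ N₊(A)` — where `N₊(A)` is the number of
entries of `A` equal to `+1` — equals `2 ^ (n (n + 1) / 2)`. -/
theorem asm_two_enumeration (n : ℕ) (hn : 1 ≤ n) :
    (∑ᶠ A ∈ {A : Matrix (Fin n) (Fin n) ℤ | IsASM A},
        (2 : ℕ) ^ (Finset.univ.filter fun ij : Fin n × Fin n => A ij.1 ij.2 = 1).card)
      = 2 ^ (n * (n + 1) / 2) :=
  asm_two_enumeration_general n
end
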